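/- arXiv:2401.12844 — 8 statements merged into one kernel-verified Lean document; each statement's English description precedes it below -/
import Mathlib

section
/- Let T > 0 and let w : ℕ₀^m → (ℝ → ℝ) be a family of differentiable, nonnegative functions on (0,T) solving the reduced multicomponent Smoluchowski equation, with ∑_{n} |n| w_n(t) < ∞ for each t. For t ∈ (0,T) and x ∈ (0,∞)^m set u(t,x) = ∑_{n∈ℕ₀^m} n w_n(t) e^{−n·x} ∈ ℝ^m. Assume the series for u converges absolutely and that termwise differentiation is valid, i.e. ∂u/∂t (t,x) = ∑_n n (d/dt w_n(t)) e^{−n·x} and the spatial Jacobian satisfies ∇u(t,x) = −∑_n n nᵀ w_n(t) e^{−n·x}, both series converging absolutely. Then u satisfies the inviscid-Burgers-type PDE ∂u/∂t (t,x) = −(∇u(t,x)) A (u(t,x) − m(0)) for all (t,x) ∈ (0,T) × (0,∞)^m. -/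
/-!
Multiply the equation for `wₙ` by `nᵢ e^{-n·x}` and sum over `n`. The loss term gives the second
moments `∑ₙ nᵢ nₐ wₙ e^{-n·x}` contracted against `A m(0)`. In the gain term write `nᵢ = kᵢ + lᵢ`
on `k + l = n`; since `kᵀAl` is symmetric the two halves are equal, and as
`e^{-n·x} = e^{-k·x} e^{-l·x}` what is left is a sum of Cauchy products of the absolutely
convergent series `∑ₖ kᵢ kₐ wₖ e^{-k·x} = -∂ₐuᵢ` and `∑ₗ l_b wₗ e^{-l·x} = u_b`.
-/

open Finset Finset.HasAntidiagonal

theorem hasSum_sum_antidiagonal_mul_of_summable_norm {R M : Type*} [NormedRing R] [CompleteSpace R]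
    [AddCommMonoid M] [HasAntidiagonal M] {f g : M → R}
    (hf : Summable fun n ↦ ‖f n‖) (hg : Summable fun n ↦ ‖g n‖) :
    HasSum (fun n ↦ ∑ kl ∈ antidiagonal n, f kl.1 * g kl.2) ((∑' n, f n) * ∑' n, g n) := by
  have hfg := summable_mul_of_summable_norm hf hg
  exact (summable_sum_mul_antidiagonal_of_summable_mul hfg).hasSum_iff.mpr
    (hf.of_norm.tsum_mul_tsum_eq_tsum_sum_antidiagonal hg.of_norm hfg).symm

theorem Finset.sum_Iic_tsub_eq_sum_antidiagonal {M β : Type*} [AddCommMonoid M] [PartialOrder M]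
    [CanonicallyOrderedAdd M] [AddLeftReflectLE M] [Sub M] [OrderedSub M]
    [LocallyFiniteOrderBot M] [HasAntidiagonal M] [AddCommMonoid β] (F : M → M → β) (n : M) :
    ∑ k ∈ Iic n, F k (n - k) = ∑ kl ∈ antidiagonal n, F kl.1 kl.2 := by
  refine sum_nbij' (fun k ↦ (k, n - k)) Prod.fst (fun k hk ↦ ?_) (fun kl hkl ↦ ?_)
    (fun _ _ ↦ rfl) (fun kl hkl ↦ ?_) (fun _ _ ↦ rfl)
  · exact mem_antidiagonal.mpr (add_tsub_cancel_of_le (mem_Iic.mp hk))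
  · exact mem_Iic.mpr (le_of_add_le_left (mem_antidiagonal.mp hkl).le)
  · rw [← mem_antidiagonal.mp hkl, add_tsub_cancel_left]

theorem Real.exp_neg_sum_nat_mul_add {ι : Type*} [Fintype ι] (x : ι → ℝ) (k l : ι → ℕ) :
    Real.exp (-∑ r, ((k + l) r : ℝ) * x r) =
      Real.exp (-∑ r, (k r : ℝ) * x r) * Real.exp (-∑ r, (l r : ℝ) * x r) := by
  rw [← Real.exp_add]
  simp only [Pi.add_apply, Nat.cast_add, add_mul, sum_add_distrib, neg_add]

section Coagulation

variable {ι : Type*} [Fintype ι] [HasAntidiagonal (ι → ℕ)] (A : Matrix ι ι ℝ) (c : (ι → ℕ) → ℝ)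

noncomputable def coagulationGain (n : ι → ℕ) : ℝ :=
  (1 / 2) * ∑ kl ∈ antidiagonal n, (∑ a, ∑ b, (kl.1 a : ℝ) * A a b * kl.2 b) * c kl.1 * c kl.2

noncomputable def reducedSmoluchowskiRHS (m₀ : ι → ℝ) (n : ι → ℕ) : ℝ :=
  coagulationGain A c n - (∑ a, ∑ b, (n a : ℝ) * A a b * m₀ b) * c n

variable {A}

theorem coord_mul_coagulationGain (hA : A.IsSymm) (n : ι → ℕ) (i : ι) :
    (n i : ℝ) * coagulationGain A c n =
      ∑ a, ∑ b, A a b *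
        ∑ kl ∈ antidiagonal n, ((kl.1 i : ℝ) * kl.1 a * c kl.1) * (kl.2 b * c kl.2) := by
  set K : (ι → ℕ) → (ι → ℕ) → ℝ := fun k l ↦ (∑ a, ∑ b, (k a : ℝ) * A a b * l b) * c k * c l
  have hB : ∀ k l : ι → ℕ,
      ∑ a, ∑ b, (k a : ℝ) * A a b * l b = ∑ a, ∑ b, (l a : ℝ) * A a b * k b := fun k l ↦ by
    rw [sum_comm]
    exact sum_congr rfl fun a _ ↦ sum_congr rfl fun b _ ↦ by rw [hA.apply b a]; ring
  have hK : ∀ k l, K k l = K l k := fun k l ↦ by simp only [K]; rw [hB k l]; ring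
  have hswap : ∑ kl ∈ antidiagonal n, (kl.2 i : ℝ) * K kl.1 kl.2 =
      ∑ kl ∈ antidiagonal n, (kl.1 i : ℝ) * K kl.1 kl.2 := by
    rw [← map_swap_antidiagonal (n := n), sum_map]
    simp [hK]
  calc (n i : ℝ) * coagulationGain A c n
      = (1 / 2) * ∑ kl ∈ antidiagonal n, ((kl.1 i : ℝ) * K kl.1 kl.2 + kl.2 i * K kl.1 kl.2) := by
        rw [coagulationGain, mul_left_comm, mul_sum]
        refine congrArg _ (sum_congr rfl fun kl hkl ↦ ?_)
        rw [← mem_antidiagonal.mp hkl, Pi.add_apply, Nat.cast_add, add_mul]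
    _ = ∑ kl ∈ antidiagonal n, (kl.1 i : ℝ) * K kl.1 kl.2 := by
        rw [sum_add_distrib, hswap]; ring
    _ = _ := by
        simp only [K, mul_sum, sum_mul]
        rw [sum_comm]
        refine sum_congr rfl fun a _ ↦ ?_
        rw [sum_comm]
        exact sum_congr rfl fun b _ ↦ sum_congr rfl fun kl _ ↦ by ring

theorem coagulationGain_eq_sum_Iic [DecidableEq ι] (n : ι → ℕ) :
    coagulationGain A c n = (1 / 2) * ∑ k ∈ Iic n,
      (∑ a, ∑ b, (k a : ℝ) * A a b * ((n - k) b : ℝ)) * c k * c (n - k) := by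
  rw [coagulationGain, sum_Iic_tsub_eq_sum_antidiagonal
    (fun k l ↦ (∑ a, ∑ b, (k a : ℝ) * A a b * l b) * c k * c l)]

theorem coagulationGain_mul_of_map_add {e : (ι → ℕ) → ℝ} (he : ∀ k l, e (k + l) = e k * e l)
    (n : ι → ℕ) : coagulationGain A (fun k ↦ c k * e k) n = coagulationGain A c n * e n := by
  rw [coagulationGain, coagulationGain, mul_assoc, sum_mul]
  refine congrArg _ (sum_congr rfl fun kl hkl ↦ ?_)
  rw [← mem_antidiagonal.mp hkl, he]
  ring

variable {c}

theorem hasSum_coord_mul_coagulationGain (hA : A.IsSymm) (i : ι)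
    (h₁ : ∀ a, Summable fun n ↦ ‖(n a : ℝ) * c n‖)
    (h₂ : ∀ a, Summable fun n ↦ ‖(n i : ℝ) * n a * c n‖) :
    HasSum (fun n ↦ (n i : ℝ) * coagulationGain A c n)
      (∑ a, ∑ b, A a b * ((∑' n, (n i : ℝ) * n a * c n) * ∑' n, (n b : ℝ) * c n)) := by
  simp_rw [coord_mul_coagulationGain c hA]
  exact hasSum_sum fun a _ ↦ hasSum_sum fun b _ ↦
    (hasSum_sum_antidiagonal_mul_of_summable_norm (h₂ a) (h₁ b)).mul_left (A a b)

theorem hasSum_coord_mul_reducedSmoluchowskiRHS (hA : A.IsSymm) (m₀ : ι → ℝ) (i : ι)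
    (h₁ : ∀ a, Summable fun n ↦ ‖(n a : ℝ) * c n‖)
    (h₂ : ∀ a, Summable fun n ↦ ‖(n i : ℝ) * n a * c n‖) :
    HasSum (fun n ↦ (n i : ℝ) * reducedSmoluchowskiRHS A c m₀ n)
      (∑ j, (∑' n, (n i : ℝ) * n j * c n) * ∑ k, A j k * ((∑' n, (n k : ℝ) * c n) - m₀ k)) := by
  have hloss : HasSum (fun n ↦ (n i : ℝ) * ((∑ a, ∑ b, (n a : ℝ) * A a b * m₀ b) * c n))
      (∑ a, ∑ b, A a b * m₀ b * ∑' n, (n i : ℝ) * n a * c n) :=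
    (hasSum_sum fun a _ ↦ hasSum_sum fun b _ ↦
      (h₂ a).of_norm.hasSum.mul_left (A a b * m₀ b)).congr_fun fun n ↦ by
        simp only [sum_mul, mul_sum]
        exact sum_congr rfl fun a _ ↦ sum_congr rfl fun b _ ↦ by ring
  have hvalue : ∑ j, (∑' n, (n i : ℝ) * n j * c n) * ∑ k, A j k * ((∑' n, (n k : ℝ) * c n) - m₀ k) =
      ∑ a, ∑ b, A a b * ((∑' n, (n i : ℝ) * n a * c n) * ∑' n, (n b : ℝ) * c n) -
        ∑ a, ∑ b, A a b * m₀ b * ∑' n, (n i : ℝ) * n a * c n := by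
    simp only [mul_sum, ← sum_sub_distrib]
    exact sum_congr rfl fun a _ ↦ sum_congr rfl fun b _ ↦ by ring
  rw [hvalue]
  exact ((hasSum_coord_mul_coagulationGain hA i h₁ h₂).sub hloss).congr_fun fun n ↦ mul_sub _ _ _

end Coagulation

theorem gf_transform_solves_burgers_general
    (m : ℕ)
    (A : Matrix (Fin m) (Fin m) ℝ) (hAsymm : A.IsSymm)
    (T : ℝ) (m₀ : Fin m → ℝ)
    (w w' : (Fin m → ℕ) → ℝ → ℝ)
    -- `w` solves the reduced multicomponent Smoluchowski equation on (0,T)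
    (hreduced : ∀ n : Fin m → ℕ, ∀ t ∈ Set.Ioo (0:ℝ) T,
      w' n t =
        (1/2) * ∑ k ∈ Finset.Iic n,
            (∑ i, ∑ j, (k i : ℝ) * A i j * ((n - k) j : ℝ)) * w k t * w (n - k) t
          - (∑ i, ∑ j, (n i : ℝ) * A i j * m₀ j) * w n t)
    -- absolute convergence of the series for u, its time derivative and its Jacobian
    (habs : ∀ t ∈ Set.Ioo (0:ℝ) T, ∀ x : Fin m → ℝ, (∀ i, 0 < x i) → ∀ i : Fin m,
      Summable (fun n : Fin m → ℕ =>
        |(n i : ℝ) * w n t * Real.exp (-∑ r, (n r : ℝ) * x r)|))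
    (habs'' : ∀ t ∈ Set.Ioo (0:ℝ) T, ∀ x : Fin m → ℝ, (∀ i, 0 < x i) → ∀ i j : Fin m,
      Summable (fun n : Fin m → ℕ =>
        |(n i : ℝ) * (n j : ℝ) * w n t * Real.exp (-∑ r, (n r : ℝ) * x r)|))
    -- termwise differentiation in time is valid
    (hut : ∀ t ∈ Set.Ioo (0:ℝ) T, ∀ x : Fin m → ℝ, (∀ i, 0 < x i) → ∀ i : Fin m,
      HasDerivAt
        (fun s => ∑' n : Fin m → ℕ, (n i : ℝ) * w n s * Real.exp (-∑ r, (n r : ℝ) * x r))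
        (∑' n : Fin m → ℕ, (n i : ℝ) * w' n t * Real.exp (-∑ r, (n r : ℝ) * x r)) t) :
    -- conclusion: ∂u/∂t = -(∇u) A (u - m₀)
    ∀ t ∈ Set.Ioo (0:ℝ) T, ∀ x : Fin m → ℝ, (∀ i, 0 < x i) → ∀ i : Fin m,
      HasDerivAt
        (fun s => ∑' n : Fin m → ℕ, (n i : ℝ) * w n s * Real.exp (-∑ r, (n r : ℝ) * x r))
        (-∑ j, (-∑' n : Fin m → ℕ,
            (n i : ℝ) * (n j : ℝ) * w n t * Real.exp (-∑ r, (n r : ℝ) * x r)) *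
          (∑ k, A j k *
            ((∑' n : Fin m → ℕ, (n k : ℝ) * w n t * Real.exp (-∑ r, (n r : ℝ) * x r))
              - m₀ k))) t := by
  let : HasAntidiagonal (Fin m → ℕ) := HasAntidiagonal.antidiagonalOfLocallyFinite
  intro t ht x hx i
  set E : (Fin m → ℕ) → ℝ := fun n ↦ Real.exp (-∑ r, (n r : ℝ) * x r)
  have hterm : ∀ n, (n i : ℝ) * w' n t * E n =
      (n i : ℝ) * reducedSmoluchowskiRHS A (fun k ↦ w k t * E k) m₀ n := fun n ↦ by
    rw [reducedSmoluchowskiRHS, coagulationGain_mul_of_map_add _ (Real.exp_neg_sum_nat_mul_add x),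
      coagulationGain_eq_sum_Iic, hreduced n t ht]
    ring
  have hsum := hasSum_coord_mul_reducedSmoluchowskiRHS (c := fun k ↦ w k t * E k) hAsymm m₀ i
    (fun a ↦ by simpa only [Real.norm_eq_abs, mul_assoc] using habs t ht x hx a)
    (fun a ↦ by simpa only [Real.norm_eq_abs, mul_assoc] using habs'' t ht x hx i a)
  convert hut t ht x hx i using 1
  rw [tsum_congr hterm, hsum.tsum_eq]
  simp only [E, mul_assoc, neg_mul, sum_neg_distrib, neg_neg]

/-- If `w` solves the reduced multicomponent Smoluchowski equation on `(0,T)`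
and the generating-function transform `u(t,x) = ∑ₙ n wₙ(t) e^{-n·x}` may be differentiated
termwise (in `t` and in `x`, with absolutely convergent series), then `u` solves the
inviscid-Burgers-type PDE `∂u/∂t = -(∇u) A (u - m(0))` on `(0,T) × (0,∞)^m`. -/
theorem gf_transform_solves_burgers
    (m : ℕ) (hm : 1 ≤ m)
    (A : Matrix (Fin m) (Fin m) ℝ) (hAsymm : A.IsSymm) (hA0 : ∀ i j, 0 ≤ A i j)
    (T : ℝ) (hT : 0 < T) (m₀ : Fin m → ℝ)
    (w w' : (Fin m → ℕ) → ℝ → ℝ)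
    (hderiv : ∀ n : Fin m → ℕ, ∀ t ∈ Set.Ioo (0:ℝ) T, HasDerivAt (w n) (w' n t) t)
    (hwpos : ∀ n : Fin m → ℕ, ∀ t ∈ Set.Ioo (0:ℝ) T, 0 ≤ w n t)
    (hmoment : ∀ t ∈ Set.Ioo (0:ℝ) T,
      Summable (fun n : Fin m → ℕ => (∑ i, (n i : ℝ)) * w n t))
    -- `w` solves the reduced multicomponent Smoluchowski equation on (0,T)
    (hreduced : ∀ n : Fin m → ℕ, ∀ t ∈ Set.Ioo (0:ℝ) T,
      w' n t =
        (1/2) * ∑ k ∈ Finset.Iic n,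
            (∑ i, ∑ j, (k i : ℝ) * A i j * ((n - k) j : ℝ)) * w k t * w (n - k) t
          - (∑ i, ∑ j, (n i : ℝ) * A i j * m₀ j) * w n t)
    -- absolute convergence of the series for u, its time derivative and its Jacobian
    (habs : ∀ t ∈ Set.Ioo (0:ℝ) T, ∀ x : Fin m → ℝ, (∀ i, 0 < x i) → ∀ i : Fin m,
      Summable (fun n : Fin m → ℕ =>
        |(n i : ℝ) * w n t * Real.exp (-∑ r, (n r : ℝ) * x r)|))
    (habs' : ∀ t ∈ Set.Ioo (0:ℝ) T, ∀ x : Fin m → ℝ, (∀ i, 0 < x i) → ∀ i : Fin m,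
      Summable (fun n : Fin m → ℕ =>
        |(n i : ℝ) * w' n t * Real.exp (-∑ r, (n r : ℝ) * x r)|))
    (habs'' : ∀ t ∈ Set.Ioo (0:ℝ) T, ∀ x : Fin m → ℝ, (∀ i, 0 < x i) → ∀ i j : Fin m,
      Summable (fun n : Fin m → ℕ =>
        |(n i : ℝ) * (n j : ℝ) * w n t * Real.exp (-∑ r, (n r : ℝ) * x r)|))
    -- termwise differentiation in time is valid
    (hut : ∀ t ∈ Set.Ioo (0:ℝ) T, ∀ x : Fin m → ℝ, (∀ i, 0 < x i) → ∀ i : Fin m,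
      HasDerivAt
        (fun s => ∑' n : Fin m → ℕ, (n i : ℝ) * w n s * Real.exp (-∑ r, (n r : ℝ) * x r))
        (∑' n : Fin m → ℕ, (n i : ℝ) * w' n t * Real.exp (-∑ r, (n r : ℝ) * x r)) t)
    -- the spatial Jacobian is given by the termwise-differentiated series
    (hux : ∀ t ∈ Set.Ioo (0:ℝ) T, ∀ x : Fin m → ℝ, (∀ i, 0 < x i) → ∀ i j : Fin m,
      HasDerivAt
        (fun s => ∑' n : Fin m → ℕ, (n i : ℝ) * w n t *
          Real.exp (-∑ r, (n r : ℝ) * Function.update x j s r))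
        (-∑' n : Fin m → ℕ,
          (n i : ℝ) * (n j : ℝ) * w n t * Real.exp (-∑ r, (n r : ℝ) * x r)) (x j)) :
    -- conclusion: ∂u/∂t = -(∇u) A (u - m₀)
    ∀ t ∈ Set.Ioo (0:ℝ) T, ∀ x : Fin m → ℝ, (∀ i, 0 < x i) → ∀ i : Fin m,
      HasDerivAt
        (fun s => ∑' n : Fin m → ℕ, (n i : ℝ) * w n s * Real.exp (-∑ r, (n r : ℝ) * x r))
        (-∑ j, (-∑' n : Fin m → ℕ,
            (n i : ℝ) * (n j : ℝ) * w n t * Real.exp (-∑ r, (n r : ℝ) * x r)) *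
          (∑ k, A j k *
            ((∑' n : Fin m → ℕ, (n k : ℝ) * w n t * Real.exp (-∑ r, (n r : ℝ) * x r))
              - m₀ k))) t :=
  gf_transform_solves_burgers_general m A hAsymm T m₀ w w' hreduced habs habs'' hut
end

section
/- Let T > 0 and let w : ℕ₀^m → (ℝ → ℝ) be a family of differentiable, nonnegative functions on (0,T) solving the reduced multicomponent Smoluchowski equation, with ∑_{n} |n| w_n(t) < ∞ for each t. For t ∈ (0,T) and x ∈ (0,∞)^m set U(t,x) = ∑_{n∈ℕ₀^m} w_n(t) e^{−n·x}. Assume termwise differentiation is valid, i.e. ∂U/∂t (t,x) = ∑_n (d/dt w_n(t)) e^{−n·x} and ∇U(t,x) = −∑_n n w_n(t) e^{−n·x}, both series converging absolutely. Then U satisfies ∂U/∂t (t,x) = ½ (∇U(t,x))ᵀ A (∇U(t,x)) + (∇U(t,x))ᵀ A m(0) for all (t,x) ∈ (0,T) × (0,∞)^m. -/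
/-!
Multiply the equation for `wₙ` by `e^{-n·x}` and sum over `n`. Since
`e^{-k·x} e^{-l·x} = e^{-(k+l)·x}`, the gain term becomes, for each pair `(i, j)`, the Cauchy
product of the absolutely convergent series `∑ₙ nᵢ wₙ e^{-n·x} = -∂ᵢU` and
`∑ₙ nⱼ wₙ e^{-n·x}`, weighted by `Aᵢⱼ`, while the loss term is linear in these series.
-/

open Finset

section CauchyProduct

variable {A : Type*} [AddCommMonoid A] [PartialOrder A] [CanonicallyOrderedAdd A] [Sub A]
  [OrderedSub A] [AddLeftReflectLE A] [LocallyFiniteOrderBot A]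

theorem Finset.sum_antidiagonal_eq_sum_Iic_tsub {M : Type*} [AddCommMonoid M]
    [HasAntidiagonal A] (f : A → A → M) (n : A) :
    ∑ kl ∈ antidiagonal n, f kl.1 kl.2 = ∑ k ∈ Iic n, f k (n - k) := by
  have tsub_fst : ∀ kl ∈ antidiagonal n, n - kl.1 = kl.2 := fun kl hkl => by
    simp [← mem_antidiagonal.mp hkl]
  refine sum_nbij' Prod.fst (fun k => (k, n - k)) (fun kl hkl => ?_) (fun k hk => ?_)
    (fun kl hkl => Prod.ext rfl (tsub_fst kl hkl)) (fun _ _ => rfl)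
    (fun kl hkl => by rw [tsub_fst kl hkl])
  · simp [← mem_antidiagonal.mp hkl]
  · simpa using add_tsub_cancel_of_le (mem_Iic.mp hk)

theorem hasSum_sum_Iic_mul_tsub {R : Type*} [NormedRing R] [CompleteSpace R] {f g : A → R}
    (hf : Summable (‖f ·‖)) (hg : Summable (‖g ·‖)) :
    HasSum (fun n => ∑ k ∈ Iic n, f k * g (n - k)) ((∑' n, f n) * ∑' n, g n) := by
  classical
  let : HasAntidiagonal A := HasAntidiagonal.antidiagonalOfLocallyFinite
  have hfg : Summable fun kl : A × A => f kl.1 * g kl.2 := summable_mul_of_summable_norm hf hg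
  simp_rw [← sum_antidiagonal_eq_sum_Iic_tsub fun k l => f k * g l]
  rw [hf.of_norm.tsum_mul_tsum_eq_tsum_sum_antidiagonal hg.of_norm hfg]
  exact (summable_sum_mul_antidiagonal_of_summable_mul hfg).hasSum

end CauchyProduct

theorem Real.exp_neg_sum_natCast_mul_add {ι : Type*} [Fintype ι] (x : ι → ℝ) (k l : ι → ℕ) :
    exp (-∑ r, ((k + l) r : ℝ) * x r) =
      exp (-∑ r, (k r : ℝ) * x r) * exp (-∑ r, (l r : ℝ) * x r) := by
  simp only [Pi.add_apply, Nat.cast_add, add_mul, sum_add_distrib, neg_add, exp_add]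

section Smoluchowski

variable {ι : Type*} [Fintype ι] [DecidableEq ι]

noncomputable def smoluchowskiRHS (A : Matrix ι ι ℝ) (m₀ : ι → ℝ) (c : (ι → ℕ) → ℝ)
    (n : ι → ℕ) : ℝ :=
  (1/2) * ∑ k ∈ Iic n, (∑ i, ∑ j, (k i : ℝ) * A i j * ((n - k) j : ℝ)) * c k * c (n - k)
    - (∑ i, ∑ j, (n i : ℝ) * A i j * m₀ j) * c n

theorem smoluchowskiRHS_mul_of_map_add {e : (ι → ℕ) → ℝ}
    (he : ∀ k l, e (k + l) = e k * e l) (A : Matrix ι ι ℝ) (m₀ : ι → ℝ) (c : (ι → ℕ) → ℝ)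
    (n : ι → ℕ) :
    smoluchowskiRHS A m₀ c n * e n = smoluchowskiRHS A m₀ (fun k => c k * e k) n := by
  have he_tsub : ∀ k ∈ Iic n, e n = e k * e (n - k) := fun k hk => by
    rw [← he, add_tsub_cancel_of_le (mem_Iic.mp hk)]
  rw [smoluchowskiRHS, smoluchowskiRHS, sub_mul, mul_assoc, sum_mul]
  congr 1
  · congr 1
    refine sum_congr rfl fun k hk => ?_
    rw [he_tsub k hk]
    ring
  · ring

theorem smoluchowskiRHS_eq_sum_mul_sum_Iic (A : Matrix ι ι ℝ) (m₀ : ι → ℝ)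
    (a : (ι → ℕ) → ℝ) (n : ι → ℕ) :
    smoluchowskiRHS A m₀ a n =
      (1/2) * ∑ i, ∑ j, A i j *
          ∑ k ∈ Iic n, ((k i : ℝ) * a k) * (((n - k) j : ℝ) * a (n - k))
        - ∑ i, ∑ j, A i j * m₀ j * ((n i : ℝ) * a n) := by
  rw [smoluchowskiRHS]
  congr 1
  · congr 1
    simp only [sum_mul, mul_sum]
    rw [sum_comm]
    refine sum_congr rfl fun i _ => ?_
    rw [sum_comm]
    exact sum_congr rfl fun j _ => sum_congr rfl fun k _ => by ring
  · simp only [sum_mul]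
    exact sum_congr rfl fun i _ => sum_congr rfl fun j _ => by ring

theorem hasSum_smoluchowskiRHS (A : Matrix ι ι ℝ) (m₀ : ι → ℝ) {a : (ι → ℕ) → ℝ}
    (ha : ∀ i, Summable fun n : ι → ℕ => ‖(n i : ℝ) * a n‖) :
    HasSum (smoluchowskiRHS A m₀ a)
      ((1/2) * ∑ i, ∑ j,
          (-∑' n : ι → ℕ, (n i : ℝ) * a n) * A i j * (-∑' n : ι → ℕ, (n j : ℝ) * a n)
        + ∑ i, ∑ j, (-∑' n : ι → ℕ, (n i : ℝ) * a n) * A i j * m₀ j) := by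
  have h : HasSum (smoluchowskiRHS A m₀ a)
      ((1/2) * ∑ i, ∑ j,
          A i j * ((∑' n : ι → ℕ, (n i : ℝ) * a n) * ∑' n : ι → ℕ, (n j : ℝ) * a n)
        - ∑ i, ∑ j, A i j * m₀ j * ∑' n : ι → ℕ, (n i : ℝ) * a n) := by
    rw [funext (smoluchowskiRHS_eq_sum_mul_sum_Iic A m₀ a)]
    exact (HasSum.mul_left _ <| hasSum_sum fun i _ => hasSum_sum fun j _ =>
      (hasSum_sum_Iic_mul_tsub (ha i) (ha j) :).mul_left (A i j)).sub <|
        hasSum_sum fun i _ => hasSum_sum fun j _ => (ha i).of_norm.hasSum.mul_left (A i j * m₀ j)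
  convert h using 1
  simp only [neg_mul, mul_neg, neg_neg, sum_neg_distrib, sub_eq_add_neg]
  congr 2
  · exact sum_congr rfl fun i _ => sum_congr rfl fun j _ => by ring
  · exact sum_congr rfl fun i _ => sum_congr rfl fun j _ => by ring

end Smoluchowski

theorem gf_solves_hamilton_jacobi_general
    (m : ℕ)
    (A : Matrix (Fin m) (Fin m) ℝ)
    (T : ℝ) (m₀ : Fin m → ℝ)
    (w w' : (Fin m → ℕ) → ℝ → ℝ)
    -- `w` solves the reduced multicomponent Smoluchowski equation on (0,T)
    (hreduced : ∀ n : Fin m → ℕ, ∀ t ∈ Set.Ioo (0:ℝ) T,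
      w' n t =
        (1/2) * ∑ k ∈ Finset.Iic n,
            (∑ i, ∑ j, (k i : ℝ) * A i j * ((n - k) j : ℝ)) * w k t * w (n - k) t
          - (∑ i, ∑ j, (n i : ℝ) * A i j * m₀ j) * w n t)
    -- absolute convergence of the series for U, its time derivative, and its gradient
    (habs'' : ∀ t ∈ Set.Ioo (0:ℝ) T, ∀ x : Fin m → ℝ, (∀ i, 0 < x i) → ∀ j : Fin m,
      Summable (fun n : Fin m → ℕ =>
        |(n j : ℝ) * w n t * Real.exp (-∑ r, (n r : ℝ) * x r)|))
    -- termwise differentiation in time is valid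
    (hUt : ∀ t ∈ Set.Ioo (0:ℝ) T, ∀ x : Fin m → ℝ, (∀ i, 0 < x i) →
      HasDerivAt
        (fun s => ∑' n : Fin m → ℕ, w n s * Real.exp (-∑ r, (n r : ℝ) * x r))
        (∑' n : Fin m → ℕ, w' n t * Real.exp (-∑ r, (n r : ℝ) * x r)) t) :
    -- conclusion: ∂U/∂t = ½ (∇U)ᵀ A (∇U) + (∇U)ᵀ A m₀
    ∀ t ∈ Set.Ioo (0:ℝ) T, ∀ x : Fin m → ℝ, (∀ i, 0 < x i) →
      HasDerivAt
        (fun s => ∑' n : Fin m → ℕ, w n s * Real.exp (-∑ r, (n r : ℝ) * x r))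
        ((1/2) * ∑ j, ∑ k,
            (-∑' n : Fin m → ℕ, (n j : ℝ) * w n t * Real.exp (-∑ r, (n r : ℝ) * x r)) *
              A j k *
            (-∑' n : Fin m → ℕ, (n k : ℝ) * w n t * Real.exp (-∑ r, (n r : ℝ) * x r))
          + ∑ j, ∑ k,
            (-∑' n : Fin m → ℕ, (n j : ℝ) * w n t * Real.exp (-∑ r, (n r : ℝ) * x r)) *
              A j k * m₀ k) t := by
  intro t ht x hx
  have htilt : ∀ n, w' n t * Real.exp (-∑ r, (n r : ℝ) * x r) =
      smoluchowskiRHS A m₀ (fun k => w k t * Real.exp (-∑ r, (k r : ℝ) * x r)) n := fun n => by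
    rw [hreduced n t ht]
    exact smoluchowskiRHS_mul_of_map_add (e := fun k => Real.exp (-∑ r, (k r : ℝ) * x r))
      (Real.exp_neg_sum_natCast_mul_add x) A m₀ (fun k => w k t) n
  have hsum := hasSum_smoluchowskiRHS A m₀ fun i => by
    simpa only [Real.norm_eq_abs, mul_assoc] using habs'' t ht x hx i
  rw [← funext htilt] at hsum
  simpa only [mul_assoc, hsum.tsum_eq] using hUt t ht x hx

/-- If `w` solves the reduced multicomponent Smoluchowski equation on `(0,T)`
and the generating function `U(t,x) = ∑ₙ wₙ(t) e^{-n·x}` may be differentiated termwise,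
then `U` solves `∂U/∂t = ½ (∇U)ᵀ A (∇U) + (∇U)ᵀ A m(0)` on `(0,T) × (0,∞)^m`. -/
theorem gf_solves_hamilton_jacobi
    (m : ℕ) (hm : 1 ≤ m)
    (A : Matrix (Fin m) (Fin m) ℝ) (hAsymm : A.IsSymm) (hA0 : ∀ i j, 0 ≤ A i j)
    (T : ℝ) (hT : 0 < T) (m₀ : Fin m → ℝ)
    (w w' : (Fin m → ℕ) → ℝ → ℝ)
    (hderiv : ∀ n : Fin m → ℕ, ∀ t ∈ Set.Ioo (0:ℝ) T, HasDerivAt (w n) (w' n t) t)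
    (hwpos : ∀ n : Fin m → ℕ, ∀ t ∈ Set.Ioo (0:ℝ) T, 0 ≤ w n t)
    (hmoment : ∀ t ∈ Set.Ioo (0:ℝ) T,
      Summable (fun n : Fin m → ℕ => (∑ i, (n i : ℝ)) * w n t))
    -- `w` solves the reduced multicomponent Smoluchowski equation on (0,T)
    (hreduced : ∀ n : Fin m → ℕ, ∀ t ∈ Set.Ioo (0:ℝ) T,
      w' n t =
        (1/2) * ∑ k ∈ Finset.Iic n,
            (∑ i, ∑ j, (k i : ℝ) * A i j * ((n - k) j : ℝ)) * w k t * w (n - k) t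
          - (∑ i, ∑ j, (n i : ℝ) * A i j * m₀ j) * w n t)
    -- absolute convergence of the series for U, its time derivative, and its gradient
    (habs : ∀ t ∈ Set.Ioo (0:ℝ) T, ∀ x : Fin m → ℝ, (∀ i, 0 < x i) →
      Summable (fun n : Fin m → ℕ => |w n t * Real.exp (-∑ r, (n r : ℝ) * x r)|))
    (habs' : ∀ t ∈ Set.Ioo (0:ℝ) T, ∀ x : Fin m → ℝ, (∀ i, 0 < x i) →
      Summable (fun n : Fin m → ℕ => |w' n t * Real.exp (-∑ r, (n r : ℝ) * x r)|))
    (habs'' : ∀ t ∈ Set.Ioo (0:ℝ) T, ∀ x : Fin m → ℝ, (∀ i, 0 < x i) → ∀ j : Fin m,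
      Summable (fun n : Fin m → ℕ =>
        |(n j : ℝ) * w n t * Real.exp (-∑ r, (n r : ℝ) * x r)|))
    -- termwise differentiation in time is valid
    (hUt : ∀ t ∈ Set.Ioo (0:ℝ) T, ∀ x : Fin m → ℝ, (∀ i, 0 < x i) →
      HasDerivAt
        (fun s => ∑' n : Fin m → ℕ, w n s * Real.exp (-∑ r, (n r : ℝ) * x r))
        (∑' n : Fin m → ℕ, w' n t * Real.exp (-∑ r, (n r : ℝ) * x r)) t)
    -- the spatial gradient is given by the termwise-differentiated series
    (hUx : ∀ t ∈ Set.Ioo (0:ℝ) T, ∀ x : Fin m → ℝ, (∀ i, 0 < x i) → ∀ j : Fin m,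
      HasDerivAt
        (fun s => ∑' n : Fin m → ℕ, w n t *
          Real.exp (-∑ r, (n r : ℝ) * Function.update x j s r))
        (-∑' n : Fin m → ℕ, (n j : ℝ) * w n t * Real.exp (-∑ r, (n r : ℝ) * x r)) (x j)) :
    -- conclusion: ∂U/∂t = ½ (∇U)ᵀ A (∇U) + (∇U)ᵀ A m₀
    ∀ t ∈ Set.Ioo (0:ℝ) T, ∀ x : Fin m → ℝ, (∀ i, 0 < x i) →
      HasDerivAt
        (fun s => ∑' n : Fin m → ℕ, w n s * Real.exp (-∑ r, (n r : ℝ) * x r))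
        ((1/2) * ∑ j, ∑ k,
            (-∑' n : Fin m → ℕ, (n j : ℝ) * w n t * Real.exp (-∑ r, (n r : ℝ) * x r)) *
              A j k *
            (-∑' n : Fin m → ℕ, (n k : ℝ) * w n t * Real.exp (-∑ r, (n r : ℝ) * x r))
          + ∑ j, ∑ k,
            (-∑' n : Fin m → ℕ, (n j : ℝ) * w n t * Real.exp (-∑ r, (n r : ℝ) * x r)) *
              A j k * m₀ k) t :=
  gf_solves_hamilton_jacobi_general m A T m₀ w w' hreduced habs'' hUt
end

section
/- Let T > 0, let m(0) ∈ ℝ^m be a fixed vector, and let w : ℕ₀^m → (ℝ → ℝ) be a family of differentiable functions on (0,T) such that for every t ∈ (0,T) and x ∈ (0,∞)^m the series u(t,x) = ∑_{n∈ℕ₀^m} n w_n(t) e^{−n·x} converges absolutely, and termwise differentiation is valid: ∂u/∂t (t,x) = ∑_n n (d/dt w_n(t)) e^{−n·x} and ∇u(t,x) = −∑_n n nᵀ w_n(t) e^{−n·x}, all series converging absolutely. If u satisfies the PDE ∂u/∂t (t,x) = −(∇u(t,x)) A (u(t,x) − m(0)) on (0,T) × (0,∞)^m, then the coefficients w_n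 solve the reduced multicomponent Smoluchowski equation on (0,T): d/dt w_n(t) = ½ ∑_{k+l=n} (kᵀAl) w_k(t) w_l(t) − (nᵀA m(0)) w_n(t) for every n ∈ ℕ₀^m with n ≠ 0. -/
/-!
Both sides of the PDE are absolutely convergent series in the exponentials `e^{-n·x}`: the
`i`-th component of `∂u/∂t` has coefficients `nᵢ w'ₙ`, and by the Cauchy product of `∇u` with
`u` the right-hand side has coefficients `∑_{k+l=n} kᵢ (kᵀAl) wₖ wₗ - nᵢ (nᵀA m₀) wₙ`.
Such a series determines its coefficients: on the ray `x = s (1, θ, …, θ^{m-1})` with `θ`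
transcendental the exponents `n·x = λₙ s` are pairwise distinct, and after multiplying by
`e^{λ s}` for the smallest exponent `λ` carrying a nonzero coefficient, letting `s → ∞` leaves
that coefficient alone. Finally, for symmetric `A` the swap `k ↔ l` lets one replace `kᵢ` by
`nᵢ / 2`, and one divides by some `nᵢ ≠ 0`.
-/

open Finset Filter Topology

section Antidiagonal

variable {ι : Type*} [Fintype ι] [DecidableEq ι]

instance Pi.instHasAntidiagonalNat : HasAntidiagonal (ι → ℕ) where
  antidiagonal n :=
    (Iic n).map ⟨fun k => (k, n - k), Function.LeftInverse.injective (g := Prod.fst) fun _ => rfl⟩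
  mem_antidiagonal {n kl} := by
    simp only [Finset.mem_map, mem_Iic]
    constructor
    · rintro ⟨k, hk, rfl⟩
      exact add_tsub_cancel_of_le hk
    · rintro rfl
      exact ⟨kl.1, le_self_add, by simp⟩

theorem sum_antidiagonal_eq_sum_Iic {M : Type*} [AddCommMonoid M]
    (F : (ι → ℕ) → (ι → ℕ) → M) (n : ι → ℕ) :
    ∑ kl ∈ antidiagonal n, F kl.1 kl.2 = ∑ k ∈ Iic n, F k (n - k) :=
  sum_map _ _ _

end Antidiagonal

theorem sum_antidiagonal_mul_eq_half_mul_sum {A : Type*} [AddCommMonoid A]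
    [HasAntidiagonal A] (φ : A →+ ℝ) (F : A → A → ℝ) (hF : ∀ k l, F k l = F l k) (n : A) :
    ∑ kl ∈ antidiagonal n, φ kl.1 * F kl.1 kl.2
      = φ n / 2 * ∑ kl ∈ antidiagonal n, F kl.1 kl.2 := by
  have hswap : ∑ kl ∈ antidiagonal n, φ kl.1 * F kl.1 kl.2
      = ∑ kl ∈ antidiagonal n, φ kl.2 * F kl.1 kl.2 :=
    sum_equiv (Equiv.prodComm A A) (fun _ => HasAntidiagonal.swap_mem_antidiagonal.symm)
      fun kl _ => by simp [hF kl.1]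
  have hadd : ∑ kl ∈ antidiagonal n, (φ kl.1 + φ kl.2) * F kl.1 kl.2
      = φ n * ∑ kl ∈ antidiagonal n, F kl.1 kl.2 := by
    rw [mul_sum]
    refine sum_congr rfl fun kl hkl => ?_
    rw [← map_add, mem_antidiagonal.1 hkl]
  simp only [add_mul, sum_add_distrib, ← hswap] at hadd
  linarith

theorem summable_norm_sum_mul_antidiagonal {A : Type*} [AddCommMonoid A]
    [HasAntidiagonal A] {f g : A → ℝ} (hf : Summable fun n => ‖f n‖)
    (hg : Summable fun n => ‖g n‖) :
    Summable fun n : A => ‖∑ kl ∈ antidiagonal n, f kl.1 * g kl.2‖ := by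
  have h : Summable fun x : A × A => ‖f x.1‖ * ‖g x.2‖ :=
    hf.mul_of_nonneg hg (fun _ => norm_nonneg _) fun _ => norm_nonneg _
  refine (summable_sum_mul_antidiagonal_of_summable_mul (f := fun k => ‖f k‖)
    (g := fun k => ‖g k‖) h).of_nonneg_of_le (fun _ => norm_nonneg _) fun n => ?_
  calc ‖∑ kl ∈ antidiagonal n, f kl.1 * g kl.2‖ ≤ ∑ kl ∈ antidiagonal n, ‖f kl.1 * g kl.2‖ :=
        norm_sum_le _ _
    _ = ∑ kl ∈ antidiagonal n, ‖f kl.1‖ * ‖g kl.2‖ := by simp only [norm_mul]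

section ExpWeight

variable {ι : Type*} [Fintype ι]

noncomputable def expWeight (n : ι → ℕ) (x : ι → ℝ) : ℝ :=
  Real.exp (-∑ r, (n r : ℝ) * x r)

theorem expWeight_add (k l : ι → ℕ) (x : ι → ℝ) :
    expWeight (k + l) x = expWeight k x * expWeight l x := by
  simp only [expWeight, ← Real.exp_add, Pi.add_apply, Nat.cast_add, add_mul, sum_add_distrib,
    neg_add]

def expSummable (x : ι → ℝ) : Submodule ℝ ((ι → ℕ) → ℝ) where
  carrier := {c | Summable fun n => ‖c n * expWeight n x‖}
  zero_mem' := by simp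
  add_mem' {c d} hc hd := (hc.add hd).of_nonneg_of_le (fun _ => norm_nonneg _) fun n => by
    simpa only [Pi.add_apply, add_mul] using norm_add_le _ _
  smul_mem' a c hc := by
    simpa only [Set.mem_ofPred_eq, Pi.smul_apply, smul_eq_mul, mul_assoc, norm_mul] using
      hc.mul_left ‖a‖

theorem mem_expSummable {x : ι → ℝ} {c : (ι → ℕ) → ℝ} :
    c ∈ expSummable x ↔ Summable fun n => ‖c n * expWeight n x‖ :=
  Iff.rfl

variable [DecidableEq ι] {x : ι → ℝ} {c d : (ι → ℕ) → ℝ}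

theorem sum_antidiagonal_mul_expWeight (n : ι → ℕ) :
    (∑ kl ∈ antidiagonal n, c kl.1 * d kl.2) * expWeight n x
      = ∑ kl ∈ antidiagonal n, c kl.1 * expWeight kl.1 x * (d kl.2 * expWeight kl.2 x) := by
  rw [sum_mul]
  refine sum_congr rfl fun kl hkl => ?_
  rw [← mem_antidiagonal.1 hkl, expWeight_add]
  ring

theorem sum_antidiagonal_mul_mem_expSummable (hc : c ∈ expSummable x) (hd : d ∈ expSummable x) :
    (fun n : ι → ℕ => ∑ kl ∈ antidiagonal n, c kl.1 * d kl.2) ∈ expSummable x := by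
  rw [mem_expSummable]
  simp only [sum_antidiagonal_mul_expWeight]
  exact summable_norm_sum_mul_antidiagonal (f := fun n => c n * expWeight n x)
    (g := fun n => d n * expWeight n x) hc hd

theorem tsum_mul_tsum_eq_tsum_sum_antidiagonal_mul_expWeight (hc : c ∈ expSummable x)
    (hd : d ∈ expSummable x) :
    (∑' n, c n * expWeight n x) * ∑' n, d n * expWeight n x
      = ∑' n : ι → ℕ, (∑ kl ∈ antidiagonal n, c kl.1 * d kl.2) * expWeight n x := by
  rw [Summable.tsum_mul_tsum_eq_tsum_sum_antidiagonal hc.of_norm hd.of_norm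
    (summable_mul_of_summable_norm (f := fun n => c n * expWeight n x)
      (g := fun n => d n * expWeight n x) hc hd)]
  simp only [sum_antidiagonal_mul_expWeight]

end ExpWeight

theorem tendsto_exp_mul_tsum_mul_exp {ι : Type*} {lam a : ι → ℝ} {i₀ : ι}
    (hmin : ∀ i ≠ i₀, a i ≠ 0 → lam i₀ < lam i)
    (hsum : Summable fun i => |a i| * Real.exp (-lam i)) :
    Tendsto (fun s => Real.exp (lam i₀ * s) * ∑' i, a i * Real.exp (-lam i * s)) atTop
      (𝓝 (a i₀)) := by
  classical
  have hshift : ∀ s, Real.exp (lam i₀ * s) * ∑' i, a i * Real.exp (-lam i * s)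
      = ∑' i, a i * Real.exp (-(lam i - lam i₀) * s) := fun s => by
    rw [← tsum_mul_left]
    refine tsum_congr fun i => ?_
    rw [mul_left_comm, ← Real.exp_add]
    ring_nf
  have hlim : ∀ i, Tendsto (fun s => a i * Real.exp (-(lam i - lam i₀) * s)) atTop
      (𝓝 (if i = i₀ then a i else 0)) := fun i => by
    split_ifs with hi
    · subst hi
      simp
    by_cases ha : a i = 0
    · simp [ha]
    simpa using ((Real.tendsto_exp_atBot.comp (tendsto_id.const_mul_atTop_of_neg
      (neg_neg_of_pos (sub_pos.2 (hmin i hi ha))))).const_mul (a i))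
  have hbound : ∀ᶠ s in atTop, ∀ i, ‖a i * Real.exp (-(lam i - lam i₀) * s)‖
      ≤ |a i| * Real.exp (-(lam i - lam i₀)) := by
    filter_upwards [eventually_ge_atTop 1] with s hs i
    rw [Real.norm_eq_abs, abs_mul, Real.abs_exp]
    by_cases ha : a i = 0
    · simp [ha]
    refine mul_le_mul_of_nonneg_left (Real.exp_le_exp.2 ?_) (abs_nonneg _)
    obtain rfl | hi := eq_or_ne i i₀
    · simp
    nlinarith [hmin i hi ha]
  have hbsum : Summable fun i => |a i| * Real.exp (-(lam i - lam i₀)) := by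
    refine (hsum.mul_right (Real.exp (lam i₀))).congr fun i => ?_
    rw [mul_assoc, ← Real.exp_add]
    ring_nf
  simpa only [hshift, tsum_ite_eq] using
    tendsto_tsum_of_dominated_convergence hbsum hlim hbound

theorem eq_zero_of_tsum_mul_exp_eventually_eq_zero {ι : Type*} {lam a : ι → ℝ}
    (hinj : Function.Injective lam) (hfin : ∀ B, {i | lam i ≤ B}.Finite)
    (hsum : Summable fun i => |a i| * Real.exp (-lam i))
    (hzero : ∀ᶠ s in atTop, ∑' i, a i * Real.exp (-lam i * s) = 0) : a = 0 := by
  by_contra! ha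
  obtain ⟨i₁, hi₁⟩ := Function.ne_iff.1 ha
  obtain ⟨i₀, ⟨hi₀, -⟩, hmin⟩ := Set.exists_min_image {i | a i ≠ 0 ∧ lam i ≤ lam i₁} lam
    ((hfin (lam i₁)).subset fun _ hi => hi.2) ⟨i₁, hi₁, le_rfl⟩
  have hlt : ∀ i ≠ i₀, a i ≠ 0 → lam i₀ < lam i := fun i hi hai => by
    rcases le_or_gt (lam i) (lam i₁) with h | h
    · exact (hmin i ⟨hai, h⟩).lt_of_ne fun he => hi (hinj he).symm
    · exact (hmin i₁ ⟨hi₁, le_rfl⟩).trans_lt h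
  have hlim := tendsto_exp_mul_tsum_mul_exp hlt hsum
  refine hi₀ (tendsto_nhds_unique hlim (tendsto_const_nhds.congr' ?_))
  filter_upwards [hzero] with s hs
  rw [hs, mul_zero]

theorem exists_pos_transcendental : ∃ θ : ℝ, 0 < θ ∧ Transcendental ℤ θ :=
  ⟨liouvilleNumber 3, (LiouvilleNumber.summable (by norm_num)).tsum_pos (fun _ => by positivity) 0
    (by positivity), transcendental_liouvilleNumber (by norm_num)⟩

theorem Transcendental.injective_sum_mul_pow {θ : ℝ} (hθ : Transcendental ℤ θ) (m : ℕ) :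
    Function.Injective fun n : Fin m → ℕ => ∑ r, (n r : ℝ) * θ ^ (r : ℕ) := by
  intro n k h
  have hpoly : ∀ n : Fin m → ℕ, Polynomial.aeval θ (Polynomial.ofFn m fun r => (n r : ℤ))
      = ∑ r, (n r : ℝ) * θ ^ (r : ℕ) := fun n => by
    simp [Polynomial.ofFn_eq_sum_monomial, Polynomial.aeval_monomial]
  have hcoeffs := Polynomial.injective_ofFn m
    (transcendental_iff_injective.1 hθ ((hpoly n).trans (h.trans (hpoly k).symm)))
  funext r
  exact_mod_cast congrFun hcoeffs r

theorem finite_setOf_sum_mul_le {ι : Type*} [Fintype ι] {c : ι → ℝ} (hc : ∀ r, 0 < c r)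
    (B : ℝ) :
    {n : ι → ℕ | ∑ r, (n r : ℝ) * c r ≤ B}.Finite := by
  classical
  refine (Set.finite_Iic fun r => ⌊B / c r⌋₊).subset fun n hn r => ?_
  have hle : (n r : ℝ) * c r ≤ B :=
    (single_le_sum (f := fun r => (n r : ℝ) * c r)
      (fun r _ => mul_nonneg (Nat.cast_nonneg _) (hc r).le) (mem_univ r)).trans hn
  exact Nat.le_floor ((le_div_iff₀ (hc r)).2 hle)

theorem eq_of_tsum_mul_expWeight_eq {m : ℕ} {c d : (Fin m → ℕ) → ℝ}
    (hc : ∀ x : Fin m → ℝ, (∀ i, 0 < x i) → c ∈ expSummable x)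
    (hd : ∀ x : Fin m → ℝ, (∀ i, 0 < x i) → d ∈ expSummable x)
    (h : ∀ x : Fin m → ℝ, (∀ i, 0 < x i) →
      ∑' n, c n * expWeight n x = ∑' n, d n * expWeight n x) : c = d := by
  obtain ⟨θ, hθ, hθt⟩ := exists_pos_transcendental
  set lam : (Fin m → ℕ) → ℝ := fun n => ∑ r, (n r : ℝ) * θ ^ (r : ℕ)
  have hx : ∀ s > 0, ∀ r : Fin m, 0 < θ ^ (r : ℕ) * s := fun s hs r => by positivity
  have hweight : ∀ (s : ℝ) (n : Fin m → ℕ),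
      expWeight n (fun r => θ ^ (r : ℕ) * s) = Real.exp (-lam n * s) :=
    fun s n => by simp only [expWeight, lam, neg_mul, sum_mul, mul_assoc]
  rw [← sub_eq_zero]
  refine eq_zero_of_tsum_mul_exp_eventually_eq_zero (hθt.injective_sum_mul_pow m)
    (finite_setOf_sum_mul_le fun r => pow_pos hθ _) ?_ ?_
  · have := sub_mem (hc _ (hx 1 one_pos)) (hd _ (hx 1 one_pos))
    simp only [mem_expSummable, hweight] at this
    simpa only [mul_one, norm_mul, Real.norm_eq_abs, Real.abs_exp] using this
  · filter_upwards [eventually_gt_atTop 0] with s hs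
    have hterm : ∀ n, (c - d) n * Real.exp (-lam n * s)
        = c n * expWeight n (fun r => θ ^ (r : ℕ) * s)
          - d n * expWeight n (fun r => θ ^ (r : ℕ) * s) := fun n => by
      rw [hweight, Pi.sub_apply, sub_mul]
    refine (tsum_congr hterm).trans ?_
    rw [(hc _ (hx s hs)).of_norm.tsum_sub (hd _ (hx s hs)).of_norm, h _ (hx s hs), sub_self]

section PDECoefficients

variable {ι : Type*} [Fintype ι] [DecidableEq ι] (A : Matrix ι ι ℝ) (m₀ : ι → ℝ)
  (w : (ι → ℕ) → ℝ) (i : ι)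

/-- The coefficient of `e^{-n·x}` in the `i`-th component of `-(∇u) A (u - m₀)`, for
`u = ∑ₙ n wₙ e^{-n·x}`. -/
noncomputable def pdeRHSCoeff (n : ι → ℕ) : ℝ :=
  ∑ kl ∈ antidiagonal n,
      (kl.1 i : ℝ) * ((∑ a, ∑ b, (kl.1 a : ℝ) * A a b * kl.2 b) * w kl.1 * w kl.2)
    - (n i : ℝ) * (∑ a, ∑ b, (n a : ℝ) * A a b * m₀ b) * w n

theorem pdeRHSCoeff_eq_sum :
    pdeRHSCoeff A m₀ w i = ∑ j, ∑ k, A j k •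
      ((fun n : ι → ℕ => ∑ kl ∈ antidiagonal n, (kl.1 i : ℝ) * kl.1 j * w kl.1 * (kl.2 k * w kl.2))
        - m₀ k • fun n => (n i : ℝ) * n j * w n) := by
  funext n
  simp only [pdeRHSCoeff, Finset.sum_apply, Pi.smul_apply, Pi.sub_apply, smul_eq_mul, mul_sub,
    sum_sub_distrib, mul_sum, sum_mul]
  congr 1
  · conv_rhs => enter [2, j]; rw [sum_comm]
    conv_rhs => rw [sum_comm]
    exact sum_congr rfl fun _ _ => sum_congr rfl fun _ _ => sum_congr rfl fun _ _ => by ring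
  · exact sum_congr rfl fun _ _ => sum_congr rfl fun _ _ => by ring

variable {A m₀ w i} {x : ι → ℝ}

theorem pdeRHSCoeff_mem_expSummable (hu : ∀ k, (fun n => (n k : ℝ) * w n) ∈ expSummable x)
    (hgrad : ∀ j, (fun n => (n i : ℝ) * n j * w n) ∈ expSummable x) :
    pdeRHSCoeff A m₀ w i ∈ expSummable x := by
  rw [pdeRHSCoeff_eq_sum]
  refine sum_mem fun j _ => sum_mem fun k _ => Submodule.smul_mem _ _
    (sub_mem ?_ (Submodule.smul_mem _ _ (hgrad j)))
  have := sum_antidiagonal_mul_mem_expSummable (hgrad j) (hu k)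
  beta_reduce at this
  exact this

theorem hasSum_pdeRHSCoeff_mul_expWeight
    (hu : ∀ k, (fun n => (n k : ℝ) * w n) ∈ expSummable x)
    (hgrad : ∀ j, (fun n => (n i : ℝ) * n j * w n) ∈ expSummable x) :
    HasSum (fun n => pdeRHSCoeff A m₀ w i n * expWeight n x)
      (-∑ j, (-∑' n, (n i : ℝ) * n j * w n * expWeight n x) *
        ∑ k, A j k * ((∑' n, (n k : ℝ) * w n * expWeight n x) - m₀ k)) := by
  have hconv : ∀ j k, HasSum (fun n : ι → ℕ => (∑ kl ∈ antidiagonal n,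
      (kl.1 i : ℝ) * kl.1 j * w kl.1 * (kl.2 k * w kl.2)) * expWeight n x)
      ((∑' n, (n i : ℝ) * n j * w n * expWeight n x) *
        ∑' n, (n k : ℝ) * w n * expWeight n x) :=
    fun j k => by
      rw [tsum_mul_tsum_eq_tsum_sum_antidiagonal_mul_expWeight (hgrad j) (hu k)]
      exact (sum_antidiagonal_mul_mem_expSummable (hgrad j) (hu k)).of_norm.hasSum
  have h := hasSum_sum fun j (_ : j ∈ univ) => hasSum_sum fun k (_ : k ∈ univ) =>
    ((hconv j k).sub ((hgrad j).of_norm.hasSum.mul_left (m₀ k))).mul_left (A j k)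
  have hterm : ∀ n, pdeRHSCoeff A m₀ w i n * expWeight n x = ∑ j, ∑ k, A j k *
      ((∑ kl ∈ antidiagonal n, (kl.1 i : ℝ) * kl.1 j * w kl.1 * (kl.2 k * w kl.2)) *
          expWeight n x - m₀ k * ((n i : ℝ) * n j * w n * expWeight n x)) := fun n => by
    simp only [pdeRHSCoeff_eq_sum, Finset.sum_apply, Pi.smul_apply, Pi.sub_apply, smul_eq_mul]
    rw [sum_mul]
    refine sum_congr rfl fun j _ => ?_
    rw [sum_mul]
    exact sum_congr rfl fun k _ => by ring
  have hval : -∑ j, (-∑' n, (n i : ℝ) * n j * w n * expWeight n x) *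
        ∑ k, A j k * ((∑' n, (n k : ℝ) * w n * expWeight n x) - m₀ k)
      = ∑ j, ∑ k, A j k * ((∑' n, (n i : ℝ) * n j * w n * expWeight n x) *
          (∑' n, (n k : ℝ) * w n * expWeight n x)
        - m₀ k * ∑' n, (n i : ℝ) * n j * w n * expWeight n x) := by
    simp only [neg_mul, sum_neg_distrib, neg_neg, mul_sum]
    exact sum_congr rfl fun j _ => sum_congr rfl fun k _ => by ring
  rw [funext hterm, hval]
  exact h

theorem pdeRHSCoeff_eq_mul_smoluchowski (hA : A.IsSymm) (n : ι → ℕ) :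
    pdeRHSCoeff A m₀ w i n = n i * ((1 / 2) * ∑ k ∈ Iic n,
      (∑ a, ∑ b, (k a : ℝ) * A a b * ((n - k) b : ℝ)) * w k * w (n - k)
        - (∑ a, ∑ b, (n a : ℝ) * A a b * m₀ b) * w n) := by
  have hF : ∀ k l : ι → ℕ, (∑ a, ∑ b, (k a : ℝ) * A a b * l b) * w k * w l
      = (∑ a, ∑ b, (l a : ℝ) * A a b * k b) * w l * w k := fun k l => by
    rw [sum_comm, mul_right_comm _ (w k)]
    congr 2
    exact sum_congr rfl fun b _ => sum_congr rfl fun a _ => by rw [hA.apply b a]; ring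
  have hsymm := sum_antidiagonal_mul_eq_half_mul_sum
    ((Nat.castAddMonoidHom ℝ).comp (Pi.evalAddMonoidHom (fun _ => ℕ) i)) _ hF n
  simp only [AddMonoidHom.comp_apply, Pi.evalAddMonoidHom_apply, Nat.coe_castAddMonoidHom]
    at hsymm
  rw [pdeRHSCoeff, hsymm, sum_antidiagonal_eq_sum_Iic
    (fun k l => (∑ a, ∑ b, (k a : ℝ) * A a b * l b) * w k * w l)]
  ring

end PDECoefficients

theorem power_series_pde_solves_smoluchowski_general
    (m : ℕ)
    (A : Matrix (Fin m) (Fin m) ℝ) (hAsymm : A.IsSymm)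
    (T : ℝ) (m₀ : Fin m → ℝ)
    (w w' : (Fin m → ℕ) → ℝ → ℝ)
    -- absolute convergence of the series for u, its time derivative and its Jacobian
    (habs : ∀ t ∈ Set.Ioo (0:ℝ) T, ∀ x : Fin m → ℝ, (∀ i, 0 < x i) → ∀ i : Fin m,
      Summable (fun n : Fin m → ℕ =>
        |(n i : ℝ) * w n t * Real.exp (-∑ r, (n r : ℝ) * x r)|))
    (habs' : ∀ t ∈ Set.Ioo (0:ℝ) T, ∀ x : Fin m → ℝ, (∀ i, 0 < x i) → ∀ i : Fin m,
      Summable (fun n : Fin m → ℕ =>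
        |(n i : ℝ) * w' n t * Real.exp (-∑ r, (n r : ℝ) * x r)|))
    (habs'' : ∀ t ∈ Set.Ioo (0:ℝ) T, ∀ x : Fin m → ℝ, (∀ i, 0 < x i) → ∀ i j : Fin m,
      Summable (fun n : Fin m → ℕ =>
        |(n i : ℝ) * (n j : ℝ) * w n t * Real.exp (-∑ r, (n r : ℝ) * x r)|))
    -- termwise differentiation in time is valid
    (hut : ∀ t ∈ Set.Ioo (0:ℝ) T, ∀ x : Fin m → ℝ, (∀ i, 0 < x i) → ∀ i : Fin m,
      HasDerivAt
        (fun s => ∑' n : Fin m → ℕ, (n i : ℝ) * w n s * Real.exp (-∑ r, (n r : ℝ) * x r))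
        (∑' n : Fin m → ℕ, (n i : ℝ) * w' n t * Real.exp (-∑ r, (n r : ℝ) * x r)) t)
    -- u satisfies the PDE ∂u/∂t = -(∇u) A (u - m₀)
    (hPDE : ∀ t ∈ Set.Ioo (0:ℝ) T, ∀ x : Fin m → ℝ, (∀ i, 0 < x i) → ∀ i : Fin m,
      HasDerivAt
        (fun s => ∑' n : Fin m → ℕ, (n i : ℝ) * w n s * Real.exp (-∑ r, (n r : ℝ) * x r))
        (-∑ j, (-∑' n : Fin m → ℕ,
            (n i : ℝ) * (n j : ℝ) * w n t * Real.exp (-∑ r, (n r : ℝ) * x r)) *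
          (∑ k, A j k *
            ((∑' n : Fin m → ℕ, (n k : ℝ) * w n t * Real.exp (-∑ r, (n r : ℝ) * x r))
              - m₀ k))) t) :
    -- conclusion: `w` solves the reduced multicomponent Smoluchowski equation for n ≠ 0
    ∀ n : Fin m → ℕ, n ≠ 0 → ∀ t ∈ Set.Ioo (0:ℝ) T,
      w' n t =
        (1/2) * ∑ k ∈ Finset.Iic n,
            (∑ i, ∑ j, (k i : ℝ) * A i j * ((n - k) j : ℝ)) * w k t * w (n - k) t
          - (∑ i, ∑ j, (n i : ℝ) * A i j * m₀ j) * w n t := by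
  intro n hn t ht
  obtain ⟨i, hi⟩ := Function.ne_iff.1 hn
  have hcoeff : (fun p : Fin m → ℕ => (p i : ℝ) * w' p t) = pdeRHSCoeff A m₀ (w · t) i :=
    eq_of_tsum_mul_expWeight_eq (fun x hx => habs' t ht x hx i)
      (fun x hx => pdeRHSCoeff_mem_expSummable (habs t ht x hx) (habs'' t ht x hx i))
      fun x hx => ((hut t ht x hx i).unique (hPDE t ht x hx i)).trans
        (hasSum_pdeRHSCoeff_mul_expWeight (habs t ht x hx) (habs'' t ht x hx i)).tsum_eq.symm
  have hcoeff_n := congrFun hcoeff n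
  rw [pdeRHSCoeff_eq_mul_smoluchowski hAsymm] at hcoeff_n
  exact mul_left_cancel₀ (Nat.cast_ne_zero.2 hi) hcoeff_n

/-- If the power-series ansatz `u(t,x) = ∑ₙ n wₙ(t) e^{-n·x}` (with valid
termwise differentiation and absolutely convergent series) satisfies the PDE
`∂u/∂t = -(∇u) A (u - m₀)` on `(0,T) × (0,∞)^m`, then the coefficients `wₙ` solve the
reduced multicomponent Smoluchowski equation on `(0,T)` for every `n ≠ 0`. -/
theorem power_series_pde_solves_smoluchowski
    (m : ℕ) (hm : 1 ≤ m)
    (A : Matrix (Fin m) (Fin m) ℝ) (hAsymm : A.IsSymm) (hA0 : ∀ i j, 0 ≤ A i j)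
    (T : ℝ) (hT : 0 < T) (m₀ : Fin m → ℝ)
    (w w' : (Fin m → ℕ) → ℝ → ℝ)
    (hderiv : ∀ n : Fin m → ℕ, ∀ t ∈ Set.Ioo (0:ℝ) T, HasDerivAt (w n) (w' n t) t)
    -- absolute convergence of the series for u, its time derivative and its Jacobian
    (habs : ∀ t ∈ Set.Ioo (0:ℝ) T, ∀ x : Fin m → ℝ, (∀ i, 0 < x i) → ∀ i : Fin m,
      Summable (fun n : Fin m → ℕ =>
        |(n i : ℝ) * w n t * Real.exp (-∑ r, (n r : ℝ) * x r)|))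
    (habs' : ∀ t ∈ Set.Ioo (0:ℝ) T, ∀ x : Fin m → ℝ, (∀ i, 0 < x i) → ∀ i : Fin m,
      Summable (fun n : Fin m → ℕ =>
        |(n i : ℝ) * w' n t * Real.exp (-∑ r, (n r : ℝ) * x r)|))
    (habs'' : ∀ t ∈ Set.Ioo (0:ℝ) T, ∀ x : Fin m → ℝ, (∀ i, 0 < x i) → ∀ i j : Fin m,
      Summable (fun n : Fin m → ℕ =>
        |(n i : ℝ) * (n j : ℝ) * w n t * Real.exp (-∑ r, (n r : ℝ) * x r)|))
    -- termwise differentiation in time is valid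
    (hut : ∀ t ∈ Set.Ioo (0:ℝ) T, ∀ x : Fin m → ℝ, (∀ i, 0 < x i) → ∀ i : Fin m,
      HasDerivAt
        (fun s => ∑' n : Fin m → ℕ, (n i : ℝ) * w n s * Real.exp (-∑ r, (n r : ℝ) * x r))
        (∑' n : Fin m → ℕ, (n i : ℝ) * w' n t * Real.exp (-∑ r, (n r : ℝ) * x r)) t)
    -- the spatial Jacobian is given by the termwise-differentiated series
    (hux : ∀ t ∈ Set.Ioo (0:ℝ) T, ∀ x : Fin m → ℝ, (∀ i, 0 < x i) → ∀ i j : Fin m,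
      HasDerivAt
        (fun s => ∑' n : Fin m → ℕ, (n i : ℝ) * w n t *
          Real.exp (-∑ r, (n r : ℝ) * Function.update x j s r))
        (-∑' n : Fin m → ℕ,
          (n i : ℝ) * (n j : ℝ) * w n t * Real.exp (-∑ r, (n r : ℝ) * x r)) (x j))
    -- u satisfies the PDE ∂u/∂t = -(∇u) A (u - m₀)
    (hPDE : ∀ t ∈ Set.Ioo (0:ℝ) T, ∀ x : Fin m → ℝ, (∀ i, 0 < x i) → ∀ i : Fin m,
      HasDerivAt
        (fun s => ∑' n : Fin m → ℕ, (n i : ℝ) * w n s * Real.exp (-∑ r, (n r : ℝ) * x r))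
        (-∑ j, (-∑' n : Fin m → ℕ,
            (n i : ℝ) * (n j : ℝ) * w n t * Real.exp (-∑ r, (n r : ℝ) * x r)) *
          (∑ k, A j k *
            ((∑' n : Fin m → ℕ, (n k : ℝ) * w n t * Real.exp (-∑ r, (n r : ℝ) * x r))
              - m₀ k))) t) :
    -- conclusion: `w` solves the reduced multicomponent Smoluchowski equation for n ≠ 0
    ∀ n : Fin m → ℕ, n ≠ 0 → ∀ t ∈ Set.Ioo (0:ℝ) T,
      w' n t =
        (1/2) * ∑ k ∈ Finset.Iic n,
            (∑ i, ∑ j, (k i : ℝ) * A i j * ((n - k) j : ℝ)) * w k t * w (n - k) t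
          - (∑ i, ∑ j, (n i : ℝ) * A i j * m₀ j) * w n t :=
  power_series_pde_solves_smoluchowski_general m A hAsymm T m₀ w w' habs habs' habs'' hut hPDE
end

section
/- Let c : ℕ₀^m → ℝ be such that for every x ∈ (0,∞)^m the series ∑_{n∈ℕ₀^m} |c_n| e^{−n·x} converges and ∑_{n∈ℕ₀^m} c_n e^{−n·x} = 0. Then c_n = 0 for every n ∈ ℕ₀^m. -/
open Real Filter

private lemma dirichlet_aux_zero (a : ℕ → ℝ)
    (h1 : ∀ q : ℝ, 0 < q → q < 1 → Summable (fun k => |a k| * q ^ k))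
    (h2 : ∀ q : ℝ, 0 < q → q < 1 → ∑' k, a k * q ^ k = 0) :
    a 0 = 0 := by
  have hsum2 : Summable (fun k => |a (k + 1)| * (1 / 2 : ℝ) ^ k) := by
    have h := ((summable_nat_add_iff 1).2 (h1 (1/2) (by norm_num) (by norm_num))).mul_right 2
    refine h.congr fun k => ?_
    rw [pow_succ]
    ring
  set C : ℝ := ∑' k, |a (k + 1)| * (1 / 2 : ℝ) ^ k with hC
  have key : ∀ q : ℝ, 0 < q → q ≤ 1 / 2 → |a 0| ≤ q * C := by
    intro q hq0 hq12
    have hq1 : q < 1 := lt_of_le_of_lt hq12 (by norm_num)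
    have habs : Summable (fun k => |a k| * q ^ k) := h1 q hq0 hq1
    have hs : Summable (fun k => a k * q ^ k) := by
      refine Summable.of_abs (habs.congr fun k => ?_)
      rw [abs_mul, abs_pow, abs_of_pos hq0]
    have hshift_abs : Summable (fun k => |a (k + 1)| * q ^ k) := by
      refine Summable.of_nonneg_of_le (fun k => by positivity) (fun k => ?_) hsum2
      exact mul_le_mul_of_nonneg_left (pow_le_pow_left₀ hq0.le hq12 k) (abs_nonneg _)
    have hshift_abs' : Summable (fun k => |a (k + 1) * q ^ (k + 1)|) := by
      refine (hshift_abs.mul_right q).congr fun k => ?_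
      rw [abs_mul, abs_pow, abs_of_pos hq0, pow_succ]
      ring
    have hzz := h2 q hq0 hq1
    rw [Summable.tsum_eq_zero_add hs, pow_zero, mul_one] at hzz
    have ha0 : a 0 = -∑' k, a (k + 1) * q ^ (k + 1) := by linarith
    have hb : |a 0| ≤ ∑' k, |a (k + 1) * q ^ (k + 1)| := by
      rw [ha0, abs_neg]
      simpa only [Real.norm_eq_abs] using norm_tsum_le_tsum_norm
        (f := fun k => a (k + 1) * q ^ (k + 1))
        (by simpa only [Real.norm_eq_abs] using hshift_abs')
    have heq : ∑' k, |a (k + 1) * q ^ (k + 1)| = (∑' k, |a (k + 1)| * q ^ k) * q := by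
      rw [← tsum_mul_right]
      exact tsum_congr fun k => by rw [abs_mul, abs_pow, abs_of_pos hq0, pow_succ]; ring
    have hle : (∑' k, |a (k + 1)| * q ^ k) ≤ C := by
      refine Summable.tsum_le_tsum (fun k => ?_) hshift_abs hsum2
      exact mul_le_mul_of_nonneg_left (pow_le_pow_left₀ hq0.le hq12 k) (abs_nonneg _)
    calc |a 0| ≤ (∑' k, |a (k + 1)| * q ^ k) * q := hb.trans heq.le
      _ ≤ C * q := mul_le_mul_of_nonneg_right hle hq0.le
      _ = q * C := mul_comm _ _
  have htends : Tendsto (fun q : ℝ => q * C) (nhdsWithin 0 (Set.Ioi 0)) (nhds 0) := by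
    have : Tendsto (fun q : ℝ => q * C) (nhds 0) (nhds (0 * C)) :=
      (continuous_id.mul continuous_const).tendsto 0
    rw [zero_mul] at this
    exact this.mono_left nhdsWithin_le_nhds
  have hev : ∀ᶠ q in nhdsWithin (0:ℝ) (Set.Ioi 0), |a 0| ≤ q * C := by
    have hmem : Set.Ioc (0:ℝ) (1/2) ∈ nhdsWithin (0:ℝ) (Set.Ioi 0) :=
      Ioc_mem_nhdsGT_of_mem (Set.mem_Ico.2 ⟨le_refl (0:ℝ), by norm_num⟩)
    filter_upwards [hmem] with q hq
    exact key q hq.1 hq.2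
  have : |a 0| ≤ 0 := ge_of_tendsto htends hev
  exact abs_nonpos_iff.mp this

private lemma dirichlet_aux (a : ℕ → ℝ)
    (h1 : ∀ q : ℝ, 0 < q → q < 1 → Summable (fun k => |a k| * q ^ k))
    (h2 : ∀ q : ℝ, 0 < q → q < 1 → ∑' k, a k * q ^ k = 0) :
    ∀ k, a k = 0 := by
  intro k
  induction k generalizing a with
  | zero => exact dirichlet_aux_zero a h1 h2
  | succ k ih =>
    have h0 := dirichlet_aux_zero a h1 h2
    have h1' : ∀ q : ℝ, 0 < q → q < 1 → Summable (fun k => |a (k + 1)| * q ^ k) := by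
      intro q hq0 hq1
      have h := ((summable_nat_add_iff 1).2 (h1 q hq0 hq1)).mul_right q⁻¹
      refine h.congr fun k => ?_
      rw [pow_succ]
      field_simp
    have h2' : ∀ q : ℝ, 0 < q → q < 1 → ∑' k, a (k + 1) * q ^ k = 0 := by
      intro q hq0 hq1
      have hs : Summable (fun k => a k * q ^ k) := by
        refine Summable.of_abs ((h1 q hq0 hq1).congr fun k => ?_)
        rw [abs_mul, abs_pow, abs_of_pos hq0]
      have hzz := h2 q hq0 hq1
      rw [Summable.tsum_eq_zero_add hs, pow_zero, mul_one, h0, zero_add] at hzz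
      have : ∑' k, a (k + 1) * q ^ (k + 1) = (∑' k, a (k + 1) * q ^ k) * q := by
        rw [← tsum_mul_right]
        exact tsum_congr fun k => by rw [pow_succ]; ring
      rw [this] at hzz
      exact (mul_eq_zero.mp hzz).resolve_right hq0.ne'
    exact ih (fun k => a (k + 1)) h1' h2'

private lemma dirichlet_key (N : ℕ) : ∀ (ι : Type) [Fintype ι], Fintype.card ι = N →
    ∀ c : (ι → ℕ) → ℝ,
    (∀ x : ι → ℝ, (∀ i, 0 < x i) →
      Summable (fun n : ι → ℕ => |c n| * Real.exp (-∑ i, (n i : ℝ) * x i))) →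
    (∀ x : ι → ℝ, (∀ i, 0 < x i) →
      ∑' n : ι → ℕ, c n * Real.exp (-∑ i, (n i : ℝ) * x i) = 0) →
    ∀ n : ι → ℕ, c n = 0 := by
  induction N with
  | zero =>
    intro ι _ hcard c _ hzero n
    haveI : IsEmpty ι := Fintype.card_eq_zero_iff.mp hcard
    have h0 := hzero (fun _ => 1) (fun i => isEmptyElim i)
    haveI : Unique (ι → ℕ) := ⟨⟨fun i => isEmptyElim i⟩, fun f => funext fun i => isEmptyElim i⟩
    rw [tsum_eq_single n (fun b hb => absurd (Subsingleton.elim b n) hb)] at h0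
    simpa using h0
  | succ N ih =>
    intro ι _ hcard c habs hzero n
    classical
    obtain ⟨i₀⟩ : Nonempty ι := Fintype.card_pos_iff.mp (hcard ▸ N.succ_pos)
    set κ := {j : ι // j ≠ i₀} with hκdef
    have hκ : Fintype.card κ = N := by
      have h1 : Fintype.card κ = Fintype.card ι - Fintype.card {j : ι // j = i₀} :=
        Fintype.card_subtype_compl _
      rw [Fintype.card_subtype_eq, hcard] at h1
      simpa using h1
    set e : (ι → ℕ) ≃ ℕ × (κ → ℕ) := Equiv.funSplitAt i₀ ℕ with he
    -- build x from t and x'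
    set mkx : ℝ → (κ → ℝ) → (ι → ℝ) :=
      fun t x' i => if h : i = i₀ then t else x' ⟨i, h⟩ with hmkx
    have mkx_pos : ∀ (t : ℝ) (x' : κ → ℝ), 0 < t → (∀ j, 0 < x' j) →
        ∀ i, 0 < mkx t x' i := by
      intro t x' ht hx' i
      simp only [hmkx]
      split
      · exact ht
      · exact hx' _
    have sum_split : ∀ (n : ι → ℕ) (t : ℝ) (x' : κ → ℝ),
        ∑ i, (n i : ℝ) * (mkx t x') i = (n i₀ : ℝ) * t + ∑ j : κ, (n j.1 : ℝ) * x' j := by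
      intro n t x'
      rw [Fintype.sum_eq_add_sum_compl i₀,
        Finset.sum_subtype (p := fun j => j ≠ i₀) ({i₀}ᶜ) (fun j => by simp)
          (fun j => (n j : ℝ) * mkx t x' j)]
      congr 1
      · simp [hmkx]
      · refine Finset.sum_congr rfl fun j _ => ?_
        have : mkx t x' j.1 = x' j := by
          simp only [hmkx]
          rw [dif_neg j.2]
        rw [this]
    -- transfer summability/vanishing along e for given t, x'
    have habsP : ∀ (t : ℝ) (x' : κ → ℝ), 0 < t → (∀ j, 0 < x' j) →
        Summable (fun p : ℕ × (κ → ℕ) =>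
          |c (e.symm p)| * Real.exp (-((p.1 : ℝ) * t + ∑ j : κ, (p.2 j : ℝ) * x' j))) := by
      intro t x' ht hx'
      have H := habs (mkx t x') (mkx_pos t x' ht hx')
      have H2 : Summable ((fun p : ℕ × (κ → ℕ) =>
          |c (e.symm p)| * Real.exp (-((p.1 : ℝ) * t + ∑ j : κ, (p.2 j : ℝ) * x' j))) ∘ e) := by
        refine H.congr fun n => ?_
        simp only [Function.comp_apply, e.symm_apply_apply]
        rw [sum_split n t x']
        rfl
      exact (Equiv.summable_iff e).mp H2
    have hzeroP : ∀ (t : ℝ) (x' : κ → ℝ), 0 < t → (∀ j, 0 < x' j) →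
        ∑' p : ℕ × (κ → ℕ),
          c (e.symm p) * Real.exp (-((p.1 : ℝ) * t + ∑ j : κ, (p.2 j : ℝ) * x' j)) = 0 := by
      intro t x' ht hx'
      have H := hzero (mkx t x') (mkx_pos t x' ht hx')
      rw [← Equiv.tsum_eq e (fun p : ℕ × (κ → ℕ) =>
        c (e.symm p) * Real.exp (-((p.1 : ℝ) * t + ∑ j : κ, (p.2 j : ℝ) * x' j)))]
      rw [← H]
      refine tsum_congr fun n => ?_
      simp only [e.symm_apply_apply]
      rw [sum_split n t x']
      rfl
    -- per-slice absolute summability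
    have habs' : ∀ (k : ℕ) (x' : κ → ℝ), (∀ j, 0 < x' j) →
        Summable (fun n' : κ → ℕ =>
          |c (e.symm (k, n'))| * Real.exp (-∑ j : κ, (n' j : ℝ) * x' j)) := by
      intro k x' hx'
      have H := ((summable_prod_of_nonneg (fun p => by positivity)).mp
        (habsP 1 x' one_pos hx')).1 k
      have := H.mul_right (Real.exp ((k : ℝ) * 1))
      refine this.congr fun n' => ?_
      rw [mul_assoc, ← Real.exp_add]
      ring_nf
    -- per-slice vanishing, via the 1-D lemma
    have hzero' : ∀ (k : ℕ) (x' : κ → ℝ), (∀ j, 0 < x' j) →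
        ∑' n' : κ → ℕ, c (e.symm (k, n')) * Real.exp (-∑ j : κ, (n' j : ℝ) * x' j) = 0 := by
      intro k x' hx'
      set a : ℕ → ℝ := fun k => ∑' n' : κ → ℕ,
        c (e.symm (k, n')) * Real.exp (-∑ j : κ, (n' j : ℝ) * x' j) with ha
      suffices h : ∀ k, a k = 0 by exact h k
      refine dirichlet_aux a ?_ ?_
      · -- summability of |a k| q^k
        intro q hq0 hq1
        have ht : 0 < -Real.log q := by
          have := Real.log_neg hq0 hq1
          linarith
        set t : ℝ := -Real.log q with htdef
        have hqt : Real.exp (-t) = q := by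
          rw [htdef, neg_neg, Real.exp_log hq0]
        have hqk : ∀ k : ℕ, Real.exp (-((k : ℝ) * t)) = q ^ k := by
          intro k
          rw [← hqt, ← Real.exp_nat_mul]
          ring_nf
        obtain ⟨h1', h2'⟩ := (summable_prod_of_nonneg (fun p => by positivity)).mp
          (habsP t x' ht hx')
        refine Summable.of_nonneg_of_le (fun k => by positivity) (fun k => ?_) h2'
        -- |a k| * q^k ≤ ∑' n', Fa (k, n')
        have hsumk : Summable (fun n' : κ → ℕ =>
            |c (e.symm (k, n'))| * Real.exp (-∑ j : κ, (n' j : ℝ) * x' j)) :=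
          habs' k x' hx'
        have hb : |a k| ≤ ∑' n' : κ → ℕ,
            |c (e.symm (k, n'))| * Real.exp (-∑ j : κ, (n' j : ℝ) * x' j) := by
          rw [ha]
          refine le_trans ?_ (le_of_eq rfl)
          simpa only [Real.norm_eq_abs, abs_mul, Real.abs_exp] using
            norm_tsum_le_tsum_norm (f := fun n' : κ → ℕ =>
              c (e.symm (k, n')) * Real.exp (-∑ j : κ, (n' j : ℝ) * x' j))
              (by simpa only [Real.norm_eq_abs, abs_mul, Real.abs_exp] using hsumk)
        calc |a k| * q ^ k
            ≤ (∑' n' : κ → ℕ,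
                |c (e.symm (k, n'))| * Real.exp (-∑ j : κ, (n' j : ℝ) * x' j)) * q ^ k :=
              mul_le_mul_of_nonneg_right hb (by positivity)
          _ = ∑' n' : κ → ℕ,
                |c (e.symm (k, n'))| * Real.exp (-((k : ℝ) * t + ∑ j : κ, (n' j : ℝ) * x' j)) := by
              rw [← tsum_mul_right]
              refine tsum_congr fun n' => ?_
              rw [← hqk k, mul_assoc, ← Real.exp_add]
              congr 1
              ring_nf
      · -- vanishing of ∑ a k q^k
        intro q hq0 hq1
        have ht : 0 < -Real.log q := by
          have := Real.log_neg hq0 hq1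
          linarith
        set t : ℝ := -Real.log q with htdef
        have hqt : Real.exp (-t) = q := by
          rw [htdef, neg_neg, Real.exp_log hq0]
        have hqk : ∀ k : ℕ, Real.exp (-((k : ℝ) * t)) = q ^ k := by
          intro k
          rw [← hqt, ← Real.exp_nat_mul]
          ring_nf
        obtain ⟨h1', h2'⟩ := (summable_prod_of_nonneg (fun p => by positivity)).mp
          (habsP t x' ht hx')
        set F : ℕ × (κ → ℕ) → ℝ := fun p =>
          c (e.symm p) * Real.exp (-((p.1 : ℝ) * t + ∑ j : κ, (p.2 j : ℝ) * x' j)) with hF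
        have hFabs : ∀ p, |F p| =
            |c (e.symm p)| * Real.exp (-((p.1 : ℝ) * t + ∑ j : κ, (p.2 j : ℝ) * x' j)) := by
          intro p
          rw [hF, abs_mul, Real.abs_exp]
        have hFsum : Summable F :=
          Summable.of_abs (((habsP t x' ht hx').congr fun p => (hFabs p).symm))
        have hFk : ∀ k, Summable (fun n' => F (k, n')) := by
          intro k
          exact Summable.of_abs ((h1' k).congr fun n' => (hFabs (k, n')).symm)
        have hdouble : ∑' (b : ℕ) (n' : κ → ℕ), F (b, n') = 0 := by
          rw [← Summable.tsum_prod' hFsum hFk]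
          exact hzeroP t x' ht hx'
        rw [← hdouble]
        refine tsum_congr fun k => ?_
        simp only [ha]
        rw [← tsum_mul_right]
        refine tsum_congr fun n' => ?_
        simp only [hF]
        rw [← hqk k, mul_assoc, ← Real.exp_add]
        congr 1
        ring_nf
    -- apply induction hypothesis to each slice
    have hslice : ∀ (k : ℕ) (n' : κ → ℕ), c (e.symm (k, n')) = 0 := by
      intro k
      exact ih κ hκ (fun n' => c (e.symm (k, n'))) (habs' k) (hzero' k)
    have : c (e.symm (e n)) = 0 := hslice (e n).1 (e n).2
    simpa using this


/-- Uniqueness of coefficients for multivariate Dirichlet-type series: if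
`∑ₙ cₙ e^{-n·x}` converges absolutely and vanishes for every `x` in the open positive
orthant, then all coefficients vanish. -/
theorem dirichlet_series_coeff_unique
    (m : ℕ) (hm : 1 ≤ m) (c : (Fin m → ℕ) → ℝ)
    (habs : ∀ x : Fin m → ℝ, (∀ i, 0 < x i) →
      Summable (fun n : Fin m → ℕ => |c n| * Real.exp (-∑ i, (n i : ℝ) * x i)))
    (hzero : ∀ x : Fin m → ℝ, (∀ i, 0 < x i) →
      ∑' n : Fin m → ℕ, c n * Real.exp (-∑ i, (n i : ℝ) * x i) = 0) :
    ∀ n : Fin m → ℕ, c n = 0 :=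
  dirichlet_key m (Fin m) (Fintype.card_fin m) c habs hzero
end

section
/- Let O ⊆ ℝ × ℝ^m be open and let G : O → ℝ^m be differentiable, satisfying for all (t,x) ∈ O and all i ∈ [m] the implicit system G_i(t,x) = e^{−x_i} · exp( t ∑_{l=1}^m A_{il} p_l (G_l(t,x) − 1) ). Then at every (t,x) ∈ O the following matrix identities hold: (I − t·diag(G(t,x))·A·P) · ∂G/∂t (t,x) = diag(G(t,x))·A·P·(G(t,x) − 𝟙), and (I − t·diag(G(t,x))·A·P) · ∇G(t,x) = −diag(G(t,x)), where ∇G is the Jacobian of G in x and 𝟙 = (1,…,1)ᵀ. -/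
/-!
Near a point of `O` each `G_i` equals `exp ψ_i`, with `ψ_i(t, x) = -x_i + t ∑_l A_il p_l (G_l - 1)`.
Differentiating gives, for every direction `v = (τ, ξ)`,
`DG_i v = G_i (-ξ_i + τ ∑_l A_il p_l (G_l - 1) + t ∑_l A_il p_l DG_l v)`,
which is the linear system `(I - t·diag(G)·A·P) DG v = diag(G) (τ A P (G - 𝟙) - ξ)`.
The two identities are its instances `v = (1, 0)` and `v = (0, e_j)`.
-/

/-- Partial derivative in the time variable of a map `G : ℝ × ℝ^m → ℝ^m` (componentwise). -/
noncomputable def pderivT {m : ℕ} (G : ℝ → (Fin m → ℝ) → Fin m → ℝ)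
    (t : ℝ) (x : Fin m → ℝ) (i : Fin m) : ℝ :=
  fderiv ℝ (fun q : ℝ × (Fin m → ℝ) => G q.1 q.2 i) (t, x) (1, 0)

/-- Partial derivative in the `j`-th spatial variable of a map `G : ℝ × ℝ^m → ℝ^m`. -/
noncomputable def pderivX {m : ℕ} (G : ℝ → (Fin m → ℝ) → Fin m → ℝ)
    (t : ℝ) (x : Fin m → ℝ) (i j : Fin m) : ℝ :=
  fderiv ℝ (fun q : ℝ × (Fin m → ℝ) => G q.1 q.2 i) (t, x) (0, Pi.single j 1)

open Matrix

section LinearAlgebra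

variable {ι α : Type*} [Fintype ι] [DecidableEq ι] [CommRing α]

theorem Matrix.diagonal_mul_mul_diagonal_mulVec_apply (g p u : ι → α) (A : Matrix ι ι α) (i : ι) :
    ((diagonal g * A * diagonal p) *ᵥ u) i = g i * ∑ l, A i l * p l * u l := by
  simp only [mulVec, dotProduct, mul_diagonal, diagonal_mul, Finset.mul_sum]
  exact Finset.sum_congr rfl fun l _ => by ring

theorem Matrix.one_sub_smul_diagonal_mul_mul_diagonal_mulVec_of_eq (A : Matrix ι ι α)
    {g p d w : ι → α} {t : α} (hd : ∀ i, d i = g i * (w i + t * ∑ l, A i l * p l * d l)) :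
    (1 - t • (diagonal g * A * diagonal p)) *ᵥ d = g * w := by
  funext i
  rw [sub_mulVec, one_mulVec, smul_mulVec, Pi.sub_apply, Pi.smul_apply,
    diagonal_mul_mul_diagonal_mulVec_apply, Pi.mul_apply, smul_eq_mul]
  linear_combination hd i

end LinearAlgebra

section ImplicitSystem

open Filter Topology

variable {ι : Type*} [Fintype ι] {A : Matrix ι ι ℝ} {p : ι → ℝ} {G : ℝ → (ι → ℝ) → ι → ℝ}
  {t : ℝ} {x : ι → ℝ}

theorem fderiv_apply_of_implicit_system
    (hdiff : ∀ l, DifferentiableAt ℝ (fun q : ℝ × (ι → ℝ) => G q.1 q.2 l) (t, x))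
    (hfix : ∀ᶠ q : ℝ × (ι → ℝ) in 𝓝 (t, x), ∀ i,
      G q.1 q.2 i = Real.exp (-q.2 i) * Real.exp (q.1 * ∑ l, A i l * p l * (G q.1 q.2 l - 1)))
    (i : ι) (v : ℝ × (ι → ℝ)) :
    fderiv ℝ (fun q : ℝ × (ι → ℝ) => G q.1 q.2 i) (t, x) v =
      G t x i * (-v.2 i + v.1 * ∑ l, A i l * p l * (G t x l - 1)
        + t * ∑ l, A i l * p l * fderiv ℝ (fun q : ℝ × (ι → ℝ) => G q.1 q.2 l) (t, x) v) := by
  set D := fun l => fderiv ℝ (fun q : ℝ × (ι → ℝ) => G q.1 q.2 l) (t, x)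
  have hsum : HasFDerivAt (fun q : ℝ × (ι → ℝ) => ∑ l, A i l * p l * (G q.1 q.2 l - 1))
      (∑ l, (A i l * p l) • D l) (t, x) :=
    HasFDerivAt.fun_sum fun l _ => ((hdiff l).hasFDerivAt.sub_const 1).const_mul _
  have hψ : HasFDerivAt
      (fun q : ℝ × (ι → ℝ) => -q.2 i + q.1 * ∑ l, A i l * p l * (G q.1 q.2 l - 1))
      (-(ContinuousLinearMap.proj i).comp (ContinuousLinearMap.snd ℝ ℝ (ι → ℝ))
        + (t • ∑ l, (A i l * p l) • D l
          + (∑ l, A i l * p l * (G t x l - 1)) • ContinuousLinearMap.fst ℝ ℝ (ι → ℝ))) (t, x) :=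
    ((hasFDerivAt_apply i x).comp (t, x) hasFDerivAt_snd).neg.add (hasFDerivAt_fst.mul hsum)
  have hG_eq_exp : (fun q : ℝ × (ι → ℝ) => G q.1 q.2 i) =ᶠ[𝓝 (t, x)]
      fun q => Real.exp (-q.2 i + q.1 * ∑ l, A i l * p l * (G q.1 q.2 l - 1)) :=
    hfix.mono fun q hq => (hq i).trans (Real.exp_add _ _).symm
  rw [(hψ.exp.congr_of_eventuallyEq hG_eq_exp).fderiv, hfix.self_of_nhds i, ← Real.exp_add]
  simp only [_root_.smul_apply, _root_.add_apply, _root_.neg_apply, ContinuousLinearMap.comp_apply,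
    ContinuousLinearMap.proj_apply, FunLike.coe_sum, ContinuousLinearMap.coe_fst',
    ContinuousLinearMap.coe_snd', Finset.sum_apply, smul_eq_mul, D]
  ring

end ImplicitSystem

theorem implicit_system_matrix_identities_general
    (m : ℕ)
    (A : Matrix (Fin m) (Fin m) ℝ)
    (p : Fin m → ℝ)
    (O : Set (ℝ × (Fin m → ℝ))) (hO : IsOpen O)
    (G : ℝ → (Fin m → ℝ) → Fin m → ℝ)
    (hGdiff : ∀ t : ℝ, ∀ x : Fin m → ℝ, (t, x) ∈ O → ∀ i : Fin m,
      DifferentiableAt ℝ (fun q : ℝ × (Fin m → ℝ) => G q.1 q.2 i) (t, x))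
    (hGfix : ∀ t : ℝ, ∀ x : Fin m → ℝ, (t, x) ∈ O → ∀ i : Fin m,
      G t x i = Real.exp (-x i) *
        Real.exp (t * ∑ l, A i l * p l * (G t x l - 1))) :
    ∀ t : ℝ, ∀ x : Fin m → ℝ, (t, x) ∈ O →
      (((1 : Matrix (Fin m) (Fin m) ℝ)
          - t • (Matrix.diagonal (G t x) * A * Matrix.diagonal p)).mulVec
            (fun i => pderivT G t x i)
        = (Matrix.diagonal (G t x) * A * Matrix.diagonal p).mulVec
            (fun i => G t x i - 1))
      ∧
      (((1 : Matrix (Fin m) (Fin m) ℝ)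
          - t • (Matrix.diagonal (G t x) * A * Matrix.diagonal p))
          * Matrix.of (fun i j => pderivX G t x i j)
        = -Matrix.diagonal (G t x)) := by
  intro t x hmem
  have hfix : ∀ᶠ q : ℝ × (Fin m → ℝ) in nhds (t, x), ∀ i, G q.1 q.2 i =
      Real.exp (-q.2 i) * Real.exp (q.1 * ∑ l, A i l * p l * (G q.1 q.2 l - 1)) := by
    filter_upwards [hO.mem_nhds hmem] with q hq using hGfix q.1 q.2 hq
  have hlin := fun v => one_sub_smul_diagonal_mul_mul_diagonal_mulVec_of_eq A
    (fderiv_apply_of_implicit_system (hGdiff t x hmem) hfix · v)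
  constructor
  · funext i
    rw [diagonal_mul_mul_diagonal_mulVec_apply]
    exact (congrFun (hlin (1, 0)) i).trans (by simp)
  · ext i j
    refine (congrFun (hlin (0, Pi.single j 1)) i).trans ?_
    by_cases hij : i = j <;> simp [hij]

/-- A differentiable solution of the implicit system
`G_i = e^{-x_i} exp(t ∑_l A_{il} p_l (G_l - 1))` on an open set satisfies the matrix
identities `(I - t·diag(G)·A·P) ∂G/∂t = diag(G)·A·P·(G - 𝟙)` and
`(I - t·diag(G)·A·P) ∇G = -diag(G)`. -/
theorem implicit_system_matrix_identities
    (m : ℕ) (hm : 1 ≤ m)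
    (A : Matrix (Fin m) (Fin m) ℝ) (hAsymm : A.IsSymm) (hA0 : ∀ i j, 0 ≤ A i j)
    (p : Fin m → ℝ) (hp0 : ∀ i, 0 ≤ p i) (hp1 : ∑ i, p i = 1)
    (O : Set (ℝ × (Fin m → ℝ))) (hO : IsOpen O)
    (G : ℝ → (Fin m → ℝ) → Fin m → ℝ)
    (hGdiff : ∀ t : ℝ, ∀ x : Fin m → ℝ, (t, x) ∈ O → ∀ i : Fin m,
      DifferentiableAt ℝ (fun q : ℝ × (Fin m → ℝ) => G q.1 q.2 i) (t, x))
    (hGfix : ∀ t : ℝ, ∀ x : Fin m → ℝ, (t, x) ∈ O → ∀ i : Fin m,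
      G t x i = Real.exp (-x i) *
        Real.exp (t * ∑ l, A i l * p l * (G t x l - 1))) :
    ∀ t : ℝ, ∀ x : Fin m → ℝ, (t, x) ∈ O →
      (((1 : Matrix (Fin m) (Fin m) ℝ)
          - t • (Matrix.diagonal (G t x) * A * Matrix.diagonal p)).mulVec
            (fun i => pderivT G t x i)
        = (Matrix.diagonal (G t x) * A * Matrix.diagonal p).mulVec
            (fun i => G t x i - 1))
      ∧
      (((1 : Matrix (Fin m) (Fin m) ℝ)
          - t • (Matrix.diagonal (G t x) * A * Matrix.diagonal p))
          * Matrix.of (fun i j => pderivX G t x i j)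
        = -Matrix.diagonal (G t x)) :=
  implicit_system_matrix_identities_general m A p O hO G hGdiff hGfix
end

section
/- Let A be a symmetric m×m real matrix with nonnegative entries, p ∈ ℝ^m a probability vector (pᵢ ≥ 0, ∑ᵢ pᵢ = 1), P = diag(p₁,…,p_m), and let t ≥ 0 satisfy t·‖AP‖₂ < 1, where ‖·‖₂ is the operator norm induced by the Euclidean norm. If s ∈ [0,1]^m satisfies s_i = exp( t ∑_{l=1}^m A_{il} p_l (s_l − 1) ) for every i ∈ [m], then s_i = 1 for every i. In other words, in the subcritical regime t < ‖AP‖₂⁻¹ the only fixed point of the offspring generating map in the cube [0,1]^m is the all-ones vector. -/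
/-- The operator norm of an `m × m` real matrix induced by the Euclidean norm. -/
noncomputable def euclideanOpNorm {m : ℕ} (M : Matrix (Fin m) (Fin m) ℝ) : ℝ :=
  ‖(Matrix.toEuclideanCLM (𝕜 := ℝ) M : EuclideanSpace ℝ (Fin m) →L[ℝ] EuclideanSpace ℝ (Fin m))‖

/-!
With `x = 𝟙 - s ≥ 0`, the bound `exp y ≥ 1 + y` turns the fixed-point equation into
`x ≤ t (AP) x` coordinatewise. Both sides being nonnegative, this gives
`‖x‖₂ ≤ t ‖(AP) x‖₂ ≤ t ‖AP‖₂ ‖x‖₂`, which forces `x = 0` when `t ‖AP‖₂ < 1`.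
-/

open Matrix

theorem PiLp.norm_le_norm_of_forall_norm_le {ι : Type*} [Fintype ι] {β : ι → Type*}
    [∀ i, SeminormedAddCommGroup (β i)] {x y : PiLp 2 β} (h : ∀ i, ‖x i‖ ≤ ‖y i‖) :
    ‖x‖ ≤ ‖y‖ := by
  rw [PiLp.norm_eq_of_L2, PiLp.norm_eq_of_L2]
  gcongr with i
  exact h i

theorem one_sub_le_smul_mulVec_one_sub {ι : Type*} [Fintype ι] {M : Matrix ι ι ℝ} {t : ℝ}
    {s : ι → ℝ} (hfix : ∀ i, s i = Real.exp (t * (M *ᵥ (s - 1)) i)) :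
    1 - s ≤ t • (M *ᵥ (1 - s)) := by
  intro i
  have h := Real.add_one_le_exp (t * (M *ᵥ (s - 1)) i)
  rw [← hfix i, ← neg_sub 1 s, mulVec_neg, Pi.neg_apply] at h
  simp only [Pi.sub_apply, Pi.one_apply, Pi.smul_apply, smul_eq_mul]
  linarith

theorem eq_zero_of_nonneg_of_le_smul_mulVec {ι : Type*} [Fintype ι] [DecidableEq ι]
    {M : Matrix ι ι ℝ} {t : ℝ} (ht : 0 ≤ t) (hsub : t * ‖toEuclideanCLM (𝕜 := ℝ) M‖ < 1)
    {x : ι → ℝ} (hx0 : 0 ≤ x) (hx : x ≤ t • (M *ᵥ x)) : x = 0 := by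
  set v : EuclideanSpace ℝ ι := WithLp.toLp 2 x
  have hv : ‖v‖ ≤ t * ‖toEuclideanCLM (𝕜 := ℝ) M‖ * ‖v‖ :=
    calc ‖v‖ ≤ ‖t • toEuclideanCLM (𝕜 := ℝ) M v‖ :=
          PiLp.norm_le_norm_of_forall_norm_le fun i => by
            change ‖x i‖ ≤ ‖(t • (M *ᵥ x)) i‖
            rw [Real.norm_of_nonneg (hx0 i), Real.norm_of_nonneg ((hx0 i).trans (hx i))]
            exact hx i
      _ ≤ t * ‖toEuclideanCLM (𝕜 := ℝ) M‖ * ‖v‖ := by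
          rw [norm_smul, Real.norm_of_nonneg ht, mul_assoc]
          gcongr
          exact (toEuclideanCLM (𝕜 := ℝ) M).le_opNorm v
  have hv0 : ‖v‖ = 0 := by nlinarith [norm_nonneg v]
  simpa [v] using hv0

theorem subcritical_unique_fixed_point_general
    (m : ℕ)
    (A : Matrix (Fin m) (Fin m) ℝ)
    (p : Fin m → ℝ)
    (t : ℝ) (ht : 0 ≤ t)
    (hsub : t * euclideanOpNorm (A * Matrix.diagonal p) < 1)
    (s : Fin m → ℝ) (hs : ∀ i, s i ∈ Set.Icc (0:ℝ) 1)
    (hfix : ∀ i, s i = Real.exp (t * ∑ l, A i l * p l * (s l - 1))) :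
    ∀ i, s i = 1 := by
  have hfix' : ∀ i, s i = Real.exp (t * ((A * diagonal p) *ᵥ (s - 1)) i) := by
    simpa [mulVec, dotProduct, mul_diagonal] using hfix
  have hdeficit : 1 - s = 0 :=
    eq_zero_of_nonneg_of_le_smul_mulVec ht hsub (fun i => sub_nonneg.2 (hs i).2)
      (one_sub_le_smul_mulVec_one_sub hfix')
  exact fun i => (sub_eq_zero.1 (congrFun hdeficit i)).symm

/-- In the subcritical regime `t‖AP‖₂ < 1`, the only fixed point in `[0,1]^m`
of the offspring generating map `s ↦ (exp(t ∑_l A_{il} p_l (s_l - 1)))_i` of the multi-type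
branching process with Poisson offspring is the all-ones vector. -/
theorem subcritical_unique_fixed_point
    (m : ℕ) (hm : 1 ≤ m)
    (A : Matrix (Fin m) (Fin m) ℝ) (hAsymm : A.IsSymm) (hA0 : ∀ i j, 0 ≤ A i j)
    (p : Fin m → ℝ) (hp0 : ∀ i, 0 ≤ p i) (hp1 : ∑ i, p i = 1)
    (t : ℝ) (ht : 0 ≤ t)
    (hsub : t * euclideanOpNorm (A * Matrix.diagonal p) < 1)
    (s : Fin m → ℝ) (hs : ∀ i, s i ∈ Set.Icc (0:ℝ) 1)
    (hfix : ∀ i, s i = Real.exp (t * ∑ l, A i l * p l * (s l - 1))) :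
    ∀ i, s i = 1 :=
  subcritical_unique_fixed_point_general m A p t ht hsub s hs hfix
end

section
/- Let A be a symmetric m×m real matrix with nonnegative entries, each row of which is nonzero, let p ∈ ℝ^m have strictly positive entries with ∑ᵢ pᵢ = 1, P = diag(p₁,…,p_m), and let t > 0. Then the function Γ is convex on the open simplex {ρ ∈ ℝ^m : ρ_l > 0 for all l, ∑_l ρ_l = 1}: for all ρ⁽¹⁾, ρ⁽²⁾ in this set and all ν ∈ [0,1], Γ(νρ⁽¹⁾ + (1−ν)ρ⁽²⁾) ≤ ν Γ(ρ⁽¹⁾) + (1−ν) Γ(ρ⁽²⁾). -/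
/-- The localization rate function
`Γ(ρ) = ∑_l ( ρ_l log( ρ_l / (t(APρ)_l) ) + t(APρ)_l ) - 1`. -/
noncomputable def locRate {m : ℕ} (A : Matrix (Fin m) (Fin m) ℝ) (p : Fin m → ℝ)
    (t : ℝ) (ρ : Fin m → ℝ) : ℝ :=
  (∑ l, (ρ l * Real.log (ρ l / (t * ∑ k, A l k * p k * ρ k))
    + t * ∑ k, A l k * p k * ρ k)) - 1

/-- Two-point log-sum inequality (convexity of the relative-entropy integrand). -/
lemma logSum_aux (a b c d ν : ℝ) (ha : 0 < a) (hb : 0 < b) (hc : 0 < c) (hd : 0 < d)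
    (hν0 : 0 ≤ ν) (hν1 : ν ≤ 1) :
    (ν * a + (1 - ν) * b) * Real.log ((ν * a + (1 - ν) * b) / (ν * c + (1 - ν) * d))
      ≤ ν * (a * Real.log (a / c)) + (1 - ν) * (b * Real.log (b / d)) := by
  have h1ν : 0 ≤ 1 - ν := by linarith
  set X := ν * a + (1 - ν) * b with hXdef
  set Y := ν * c + (1 - ν) * d with hYdef
  have hX : 0 < X := by
    rcases eq_or_lt_of_le hν0 with h | h
    · have : X = b := by rw [hXdef, ← h]; ring
      rw [this]; exact hb
    · have h1 : 0 < ν * a := mul_pos h ha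
      have h2 : 0 ≤ (1 - ν) * b := mul_nonneg h1ν hb.le
      linarith
  have hY : 0 < Y := by
    rcases eq_or_lt_of_le hν0 with h | h
    · have : Y = d := by rw [hYdef, ← h]; ring
      rw [this]; exact hd
    · have h1 : 0 < ν * c := mul_pos h hc
      have h2 : 0 ≤ (1 - ν) * d := mul_nonneg h1ν hd.le
      linarith
  have harg1 : 0 < X * c / (a * Y) := by positivity
  have harg2 : 0 < X * d / (b * Y) := by positivity
  have h1 : ν * a * Real.log (X * c / (a * Y)) ≤ ν * a * (X * c / (a * Y) - 1) :=
    mul_le_mul_of_nonneg_left (Real.log_le_sub_one_of_pos harg1)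
      (mul_nonneg hν0 ha.le)
  have h2 : (1 - ν) * b * Real.log (X * d / (b * Y)) ≤ (1 - ν) * b * (X * d / (b * Y) - 1) :=
    mul_le_mul_of_nonneg_left (Real.log_le_sub_one_of_pos harg2)
      (mul_nonneg h1ν hb.le)
  have h3 : ν * a * (X * c / (a * Y) - 1) + (1 - ν) * b * (X * d / (b * Y) - 1) = 0 := by
    field_simp
    ring
  have h4 : ν * a * Real.log (X * c / (a * Y)) + (1 - ν) * b * Real.log (X * d / (b * Y))
      = X * Real.log (X / Y)
        - (ν * (a * Real.log (a / c)) + (1 - ν) * (b * Real.log (b / d))) := by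
    rw [Real.log_div (by positivity) (by positivity),
      Real.log_div (by positivity) (by positivity),
      Real.log_div hX.ne' hY.ne', Real.log_div ha.ne' hc.ne', Real.log_div hb.ne' hd.ne',
      Real.log_mul hX.ne' hc.ne', Real.log_mul hX.ne' hd.ne',
      Real.log_mul ha.ne' hY.ne', Real.log_mul hb.ne' hY.ne']
    ring
  linarith

/-- the localization rate function `Γ` is convex on the open simplex. -/
theorem locRate_convex
    (m : ℕ) (hm : 1 ≤ m)
    (A : Matrix (Fin m) (Fin m) ℝ) (hAsymm : A.IsSymm) (hA0 : ∀ i j, 0 ≤ A i j)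
    (hArow : ∀ i, ∃ j, A i j ≠ 0)
    (p : Fin m → ℝ) (hp : ∀ i, 0 < p i) (hp1 : ∑ i, p i = 1)
    (t : ℝ) (ht : 0 < t) :
    ∀ ρ₁ ρ₂ : Fin m → ℝ,
      (∀ l, 0 < ρ₁ l) → (∑ l, ρ₁ l = 1) →
      (∀ l, 0 < ρ₂ l) → (∑ l, ρ₂ l = 1) →
      ∀ ν : ℝ, ν ∈ Set.Icc (0:ℝ) 1 →
        locRate A p t (fun l => ν * ρ₁ l + (1 - ν) * ρ₂ l)
          ≤ ν * locRate A p t ρ₁ + (1 - ν) * locRate A p t ρ₂ := by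
  intro ρ₁ ρ₂ h1pos h1sum h2pos h2sum ν hν
  obtain ⟨hν0, hν1⟩ := hν
  have h1ν : 0 ≤ 1 - ν := by linarith
  -- positivity of the linear forms
  have hLpos : ∀ (ρ : Fin m → ℝ), (∀ l, 0 < ρ l) → ∀ l,
      0 < t * ∑ k, A l k * p k * ρ k := by
    intro ρ hρ l
    apply mul_pos ht
    obtain ⟨j, hj⟩ := hArow l
    refine Finset.sum_pos' (fun k _ =>
      mul_nonneg (mul_nonneg (hA0 l k) (hp k).le) (hρ k).le)
      ⟨j, Finset.mem_univ j, ?_⟩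
    have hAj : 0 < A l j := lt_of_le_of_ne (hA0 l j) (Ne.symm hj)
    exact mul_pos (mul_pos hAj (hp j)) (hρ j)
  -- linearity of the linear forms
  have lin : ∀ l, (∑ k, A l k * p k * (ν * ρ₁ k + (1 - ν) * ρ₂ k))
      = ν * (∑ k, A l k * p k * ρ₁ k) + (1 - ν) * (∑ k, A l k * p k * ρ₂ k) := by
    intro l
    rw [Finset.mul_sum, Finset.mul_sum, ← Finset.sum_add_distrib]
    exact Finset.sum_congr rfl fun k _ => by ring
  unfold locRate
  have main : ∀ l, (ν * ρ₁ l + (1 - ν) * ρ₂ l) *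
        Real.log ((ν * ρ₁ l + (1 - ν) * ρ₂ l)
          / (t * ∑ k, A l k * p k * (ν * ρ₁ k + (1 - ν) * ρ₂ k)))
        + t * ∑ k, A l k * p k * (ν * ρ₁ k + (1 - ν) * ρ₂ k)
      ≤ ν * (ρ₁ l * Real.log (ρ₁ l / (t * ∑ k, A l k * p k * ρ₁ k))
            + t * ∑ k, A l k * p k * ρ₁ k)
        + (1 - ν) * (ρ₂ l * Real.log (ρ₂ l / (t * ∑ k, A l k * p k * ρ₂ k))
            + t * ∑ k, A l k * p k * ρ₂ k) := by
    intro l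
    have hc := hLpos ρ₁ h1pos l
    have hd := hLpos ρ₂ h2pos l
    have hlin : t * ∑ k, A l k * p k * (ν * ρ₁ k + (1 - ν) * ρ₂ k)
        = ν * (t * ∑ k, A l k * p k * ρ₁ k)
          + (1 - ν) * (t * ∑ k, A l k * p k * ρ₂ k) := by
      rw [lin l]; ring
    rw [hlin]
    have := logSum_aux (ρ₁ l) (ρ₂ l) (t * ∑ k, A l k * p k * ρ₁ k)
      (t * ∑ k, A l k * p k * ρ₂ k) ν (h1pos l) (h2pos l) hc hd hν0 hν1
    linarith
  have hsum := Finset.sum_le_sum (fun l (_ : l ∈ Finset.univ) => main l)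
  have hrhs : (∑ l, (ν * (ρ₁ l * Real.log (ρ₁ l / (t * ∑ k, A l k * p k * ρ₁ k))
            + t * ∑ k, A l k * p k * ρ₁ k)
        + (1 - ν) * (ρ₂ l * Real.log (ρ₂ l / (t * ∑ k, A l k * p k * ρ₂ k))
            + t * ∑ k, A l k * p k * ρ₂ k))) - 1
      = ν * ((∑ l, (ρ₁ l * Real.log (ρ₁ l / (t * ∑ k, A l k * p k * ρ₁ k))
            + t * ∑ k, A l k * p k * ρ₁ k)) - 1)
        + (1 - ν) * ((∑ l, (ρ₂ l * Real.log (ρ₂ l / (t * ∑ k, A l k * p k * ρ₂ k))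
            + t * ∑ k, A l k * p k * ρ₂ k)) - 1) := by
    rw [Finset.sum_add_distrib, ← Finset.mul_sum, ← Finset.mul_sum]; ring
  rw [← hrhs]
  exact sub_le_sub_right hsum 1
end

section
/- Work in the ring R = MvPowerSeries over ℝ in m variables X₁,…,X_m. Let A be a symmetric m×m real matrix with nonnegative entries, p ∈ ℝ^m a probability vector, and t > 0. For i ∈ [m] let Φ_i ∈ R be the formal power series of s ↦ exp( t ∑_{l=1}^m A_{il} p_l (s_l − 1) ), and suppose G₁,…,G_m ∈ R have zero constant term and satisfy G_i = X_i · Φ_i(G₁,…,G_m) for all i ∈ [m]. Then for every multi-index n ∈ ℕ₀^m and all indices i, j ∈ [m] with n_i > 0 and n_j > 0, one has (p_i / n_i) · (coefficient of X^n in G_i) = (p_j / n_j) · (coefficient of X^n in G_j). -/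
/-!
Write `θ_j = X_j ∂/∂X_j` for the Euler operator, which multiplies the coefficient of `X^n` by
`n_j`. Each factor `exp(a (G_l - 1))` of `Φ_i(G)` has `θ_j`-derivative `a θ_j G_l` times itself,
so the fixed-point equation gives
`θ_j G_i = δ_{ij} G_i + t G_i ∑_l A_{il} p_l θ_j G_l`.
Since `A` is symmetric, this makes
`U = ∑_l p_l G_l - (t/2) ∑_{k,l} A_{kl} p_k p_l G_k G_l`
a potential: `θ_j U = p_j G_j` for every `j`. Reading off the coefficient of `X^n` gives
`n_j coeff_n U = p_j coeff_n G_j`, so `(p_j/n_j) coeff_n G_j = coeff_n U` whenever `n_j > 0`.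
-/

/-- Substitution of a multivariate power series `g` (with zero constant term) into the
one-variable exponential-type series `s ↦ ∑_j (a^j/j!) s^j`: since `coeff d (g^j) = 0`
for `j > |d|` when `g` has zero constant term, the coefficient at `d` is the finite sum
`∑_{j ≤ |d|} (a^j/j!) coeff d (g^j)`. -/
noncomputable def poisFactor {m : ℕ} (a : ℝ) (g : MvPowerSeries (Fin m) ℝ) :
    MvPowerSeries (Fin m) ℝ :=
  fun d => ∑ j ∈ Finset.range ((∑ l, d l) + 1),
    (a ^ j / (Nat.factorial j)) * MvPowerSeries.coeff d (g ^ j)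

/-- The formal power series of `s ↦ exp(t ∑_l A_{il} p_l (s_l - 1))` with the family `g`
substituted for the variables. -/
noncomputable def offspringPGF {m : ℕ} (A : Matrix (Fin m) (Fin m) ℝ) (p : Fin m → ℝ)
    (t : ℝ) (i : Fin m) (g : Fin m → MvPowerSeries (Fin m) ℝ) : MvPowerSeries (Fin m) ℝ :=
  Real.exp (-(t * ∑ l, A i l * p l)) • ∏ l, poisFactor (t * A i l * p l) (g l)

open MvPowerSeries Finset

namespace Derivation

variable {R A : Type*} [CommSemiring R] [CommSemiring A] [Algebra R A] (D : Derivation R A A)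

theorem map_prod_of_map_eq_mul {ι : Type*} (s : Finset ι) {f h : ι → A}
    (hf : ∀ l ∈ s, D (f l) = f l * h l) :
    D (∏ l ∈ s, f l) = (∏ l ∈ s, f l) * ∑ l ∈ s, h l := by
  classical
  induction s using Finset.induction_on with
  | empty => simp
  | insert a s ha ih =>
    rw [prod_insert ha, sum_insert ha, leibniz, smul_eq_mul, smul_eq_mul,
      ih fun l hl => hf l (mem_insert_of_mem hl), hf a (mem_insert_self a s)]
    ring

theorem map_sum_sum_smul_mul_of_symm {ι : Type*} (s : Finset ι) {W : ι → ι → R}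
    (hW : ∀ k l, W k l = W l k) (f : ι → A) :
    D (∑ k ∈ s, ∑ l ∈ s, W k l • (f k * f l))
      = 2 • ∑ k ∈ s, ∑ l ∈ s, W k l • (f k * D (f l)) := by
  have hswap : ∑ k ∈ s, ∑ l ∈ s, W k l • (f l * D (f k))
      = ∑ k ∈ s, ∑ l ∈ s, W k l • (f k * D (f l)) := by
    rw [sum_comm]
    exact sum_congr rfl fun k _ => sum_congr rfl fun l _ => by rw [hW]
  simp only [map_sum, map_smul, leibniz, smul_eq_mul, smul_add, sum_add_distrib]
  rw [hswap, two_nsmul]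

end Derivation

noncomputable def expTrunc {K A : Type*} [Field K] [CommRing A] [Algebra K A]
    (a : K) (g : A) (N : ℕ) : A :=
  ∑ j ∈ range N, (a ^ j / (Nat.factorial j : K)) • g ^ j

theorem Derivation.map_expTrunc_succ {K A : Type*} [Field K] [CharZero K] [CommRing A]
    [Algebra K A] (D : Derivation K A A) (a : K) (g : A) (N : ℕ) :
    D (expTrunc a g (N + 1)) = a • (expTrunc a g N * D g) := by
  rw [expTrunc, sum_range_succ', expTrunc, sum_mul, smul_sum]
  simp only [map_add, map_sum, map_smul, leibniz_pow, pow_zero, D.map_one_eq_zero, smul_zero,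
    add_zero, add_tsub_cancel_right, smul_eq_mul]
  refine sum_congr rfl fun k _ => ?_
  rw [← Nat.cast_smul_eq_nsmul K, smul_smul, smul_mul_assoc, smul_smul, Nat.factorial_succ]
  congr 1
  push_cast
  field_simp
  ring

namespace MvPowerSeries

section

variable {σ R : Type*} [CommSemiring R]

noncomputable def eulerOp (i : σ) : Derivation R (MvPowerSeries σ R) (MvPowerSeries σ R) :=
  (X i : MvPowerSeries σ R) • pderiv R i

theorem coeff_eulerOp (i : σ) (f : MvPowerSeries σ R) (d : σ →₀ ℕ) :
    coeff d (eulerOp i f) = d i * coeff d f := by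
  rw [eulerOp, Derivation.smul_apply, smul_eq_mul, X_def, coeff_monomial_mul]
  split_ifs with h
  · rw [one_mul, coeff_pderiv, tsub_add_cancel_of_le h, Finsupp.tsub_apply,
      Finsupp.single_eq_same, mul_comm]
    congr 1
    norm_cast
    rw [Nat.sub_add_cancel (Finsupp.single_le_iff.mp h)]
  · obtain hi : d i = 0 := by rwa [Finsupp.single_le_iff, not_le, Nat.lt_one_iff] at h
    simp [hi]

theorem eulerOp_X [DecidableEq σ] (j i : σ) :
    eulerOp j (X i : MvPowerSeries σ R) = if j = i then X i else 0 := by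
  split_ifs with h
  · subst h
    simp [eulerOp]
  · simp [eulerOp, pderiv_X_of_ne (Ne.symm h)]

theorem coeff_mul_congr_left {F F' : MvPowerSeries σ R}
    (H : MvPowerSeries σ R) {d : σ →₀ ℕ} (h : ∀ v ≤ d, coeff v F = coeff v F') :
    coeff d (F * H) = coeff d (F' * H) := by
  classical
  have htrunc : trunc' R d F = trunc' R d F' := by
    ext v
    simp only [coeff_trunc']
    split_ifs with hv
    exacts [h v hv, rfl]
  rw [← coeff_trunc'_mul_trunc'_eq_coeff_mul d F H le_rfl, htrunc,
    coeff_trunc'_mul_trunc'_eq_coeff_mul d F' H le_rfl]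

end

section Progeny

variable {m : ℕ}

theorem coeff_poisFactor_eq_coeff_expTrunc {g : MvPowerSeries (Fin m) ℝ}
    (hg : constantCoeff g = 0) (a : ℝ) {d : Fin m →₀ ℕ} {N : ℕ} (hN : ∑ l, d l < N) :
    coeff d (poisFactor a g) = coeff d (expTrunc a g N) := by
  have hvanish : ∀ j, ∑ l, d l < j → coeff d (g ^ j) = 0 := fun j hj =>
    coeff_of_lt_order <| by
      rw [Finsupp.degree_eq_sum]
      exact (Nat.cast_lt.mpr hj).trans_le (le_order_pow_of_constantCoeff_eq_zero j hg)
  rw [expTrunc, map_sum]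
  simp only [coeff_smul]
  refine sum_subset (range_subset_range.mpr (by omega)) fun j _ hjd => ?_
  rw [mem_range, not_lt] at hjd
  rw [hvanish j (by omega), mul_zero]

theorem eulerOp_poisFactor (i : Fin m) {g : MvPowerSeries (Fin m) ℝ}
    (hg : constantCoeff g = 0) (a : ℝ) :
    eulerOp i (poisFactor a g) = poisFactor a g * (a • eulerOp i g) := by
  ext d
  -- below degree `N`, `poisFactor a g` agrees with `expTrunc a g N`, a finite sum of powers
  set N := ∑ l, d l + 1
  have hlow : ∀ v ≤ d, coeff v (poisFactor a g) = coeff v (expTrunc a g N) := fun v hv =>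
    coeff_poisFactor_eq_coeff_expTrunc hg a (Nat.lt_succ_of_le (sum_le_sum fun l _ => hv l))
  calc coeff d (eulerOp i (poisFactor a g))
      = d i * coeff d (expTrunc a g (N + 1)) := by
        rw [coeff_eulerOp, coeff_poisFactor_eq_coeff_expTrunc hg a (N := N + 1) (by omega)]
    _ = coeff d (a • (expTrunc a g N * eulerOp i g)) := by
        rw [← Derivation.map_expTrunc_succ, coeff_eulerOp]
    _ = coeff d (poisFactor a g * (a • eulerOp i g)) := by
        rw [mul_smul_comm, coeff_smul, coeff_smul,
          coeff_mul_congr_left _ fun v hv => (hlow v hv).symm]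

variable (A : Matrix (Fin m) (Fin m) ℝ) (p : Fin m → ℝ) (t : ℝ)
  {G : Fin m → MvPowerSeries (Fin m) ℝ}

theorem eulerOp_offspringPGF (hG0 : ∀ i, constantCoeff (G i) = 0) (i j : Fin m) :
    eulerOp j (offspringPGF A p t i G)
      = offspringPGF A p t i G * ∑ l, (t * A i l * p l) • eulerOp j (G l) := by
  rw [offspringPGF, Derivation.map_smul,
    Derivation.map_prod_of_map_eq_mul _ _ fun l _ => eulerOp_poisFactor j (hG0 l) _,
    smul_mul_assoc]

theorem eulerOp_of_eq_X_mul_offspringPGF (hG0 : ∀ i, constantCoeff (G i) = 0)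
    (hGfix : ∀ i, G i = X i * offspringPGF A p t i G) (i j : Fin m) :
    eulerOp j (G i)
      = (if j = i then G i else 0) + G i * ∑ l, (t * A i l * p l) • eulerOp j (G l) := by
  conv_lhs => rw [hGfix i]
  rw [Derivation.leibniz, eulerOp_X, eulerOp_offspringPGF A p t hG0, smul_eq_mul, smul_eq_mul,
    hGfix i]
  split_ifs <;> ring

noncomputable def coagPotential (G : Fin m → MvPowerSeries (Fin m) ℝ) :
    MvPowerSeries (Fin m) ℝ :=
  ∑ l, p l • G l - (t / 2) • ∑ k, ∑ l, (A k l * p k * p l) • (G k * G l)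

theorem eulerOp_coagPotential (hA : A.IsSymm) (hG0 : ∀ i, constantCoeff (G i) = 0)
    (hGfix : ∀ i, G i = X i * offspringPGF A p t i G) (j : Fin m) :
    eulerOp j (coagPotential A p t G) = p j • G j := by
  have hW : ∀ k l, A k l * p k * p l = A l k * p l * p k := fun k l => by
    rw [hA.apply k l]; ring
  have hlinear : eulerOp j (∑ x, p x • G x)
      = p j • G j + t • ∑ k, ∑ l, (A k l * p k * p l) • (G k * eulerOp j (G l)) := by
    have hfix := eulerOp_of_eq_X_mul_offspringPGF A p t hG0 hGfix
    rw [map_sum, sum_congr rfl fun x _ => by rw [Derivation.map_smul, hfix]]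
    simp only [smul_add, sum_add_distrib, smul_ite, smul_zero, sum_ite_eq, if_pos (mem_univ j)]
    congr 1
    rw [smul_sum]
    refine sum_congr rfl fun k _ => ?_
    rw [mul_sum, smul_sum, smul_sum]
    refine sum_congr rfl fun l _ => ?_
    rw [mul_smul_comm, smul_smul, smul_smul]
    congr 1
    ring
  rw [coagPotential, map_sub, Derivation.map_smul, hlinear,
    Derivation.map_sum_sum_smul_mul_of_symm _ _ hW, two_nsmul, smul_add, ← add_smul, add_halves,
    add_sub_cancel_right]

end Progeny

end MvPowerSeries

theorem progeny_coeff_consistency_general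
    (m : ℕ)
    (A : Matrix (Fin m) (Fin m) ℝ) (hAsymm : A.IsSymm)
    (p : Fin m → ℝ)
    (t : ℝ)
    (G : Fin m → MvPowerSeries (Fin m) ℝ)
    (hG0 : ∀ i, MvPowerSeries.constantCoeff (G i) = 0)
    (hGfix : ∀ i, G i = (MvPowerSeries.X i) * offspringPGF A p t i G) :
    ∀ (n : Fin m →₀ ℕ) (i j : Fin m), 0 < n i → 0 < n j →
      (p i / (n i : ℝ)) * MvPowerSeries.coeff n (G i)
        = (p j / (n j : ℝ)) * MvPowerSeries.coeff n (G j) := by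
  intro n i j hi hj
  have hU : ∀ k, 0 < n k → p k / n k * coeff n (G k) = coeff n (coagPotential A p t G) := by
    intro k hk
    have h := congrArg (coeff n) (eulerOp_coagPotential A p t hAsymm hG0 hGfix k)
    rw [coeff_eulerOp, coeff_smul] at h
    rw [div_mul_eq_mul_div, ← h, mul_div_cancel_left₀ _ (by positivity)]
  rw [hU i hi, hU j hj]

/-- consistency of the coagulation solution: if `G_i = X_i · Φ_i(G₁,…,G_m)`
with the `G_i` of zero constant term, then for every multi-index `n` and all `i, j` with
`n_i > 0` and `n_j > 0`, `(p_i/n_i)·coeff_{X^n}(G_i) = (p_j/n_j)·coeff_{X^n}(G_j)`. -/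
theorem progeny_coeff_consistency
    (m : ℕ) (hm : 1 ≤ m)
    (A : Matrix (Fin m) (Fin m) ℝ) (hAsymm : A.IsSymm) (hA0 : ∀ i j, 0 ≤ A i j)
    (p : Fin m → ℝ) (hp0 : ∀ i, 0 ≤ p i) (hp1 : ∑ i, p i = 1)
    (t : ℝ) (ht : 0 < t)
    (G : Fin m → MvPowerSeries (Fin m) ℝ)
    (hG0 : ∀ i, MvPowerSeries.constantCoeff (G i) = 0)
    (hGfix : ∀ i, G i = (MvPowerSeries.X i) * offspringPGF A p t i G) :
    ∀ (n : Fin m →₀ ℕ) (i j : Fin m), 0 < n i → 0 < n j →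
      (p i / (n i : ℝ)) * MvPowerSeries.coeff n (G i)
        = (p j / (n j : ℝ)) * MvPowerSeries.coeff n (G j) :=
  progeny_coeff_consistency_general m A hAsymm p t G hG0 hGfix
end
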